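/- arXiv:1004.1622 — 7 statements merged into one kernel-verified Lean document; each statement's English description precedes it below -/
import Mathlib

section
/- If the Lanczos biconjugate A-orthonormalization procedure is run for m steps without breakdown, then the right and left Lanczos-type vectors form a biconjugate A-orthonormal system: ⟨w_i, A v_j⟩ = δ_{ij} (Kronecker delta) for all 1 ≤ i, j ≤ m. -/
open Matrix

/-- Data of the Lanczos biconjugate A-orthonormalization procedure: the matrix `A`,
the right and left Lanczos-type vectors `v j`, `w j`, the unnormalized vectors
`vhat j`, `what j`, and the recurrence scalars `alpha`, `beta`, `delta`. -/
structure LanczosData (n : ℕ) where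
  A : Matrix (Fin n) (Fin n) ℝ
  v : ℕ → (Fin n → ℝ)
  w : ℕ → (Fin n → ℝ)
  vhat : ℕ → (Fin n → ℝ)
  what : ℕ → (Fin n → ℝ)
  alpha : ℕ → ℝ
  beta : ℕ → ℝ
  delta : ℕ → ℝ

/-- The Lanczos biconjugate A-orthonormalization procedure runs `m` steps without
breakdown: `v 0 = w 0 = 0`, `beta 1 = delta 1 = 0`, `⟨w 1, A v 1⟩ = 1`, and for each
step `1 ≤ j ≤ m` the recurrence relations hold with
`⟨ŵ_{j+1}, A v̂_{j+1}⟩ ≠ 0` (equivalently `delta (j+1) ≠ 0`). -/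
def LanczosData.Runs {n : ℕ} (L : LanczosData n) (m : ℕ) : Prop :=
  L.v 0 = 0 ∧ L.w 0 = 0 ∧ L.beta 1 = 0 ∧ L.delta 1 = 0 ∧
  L.w 1 ⬝ᵥ (L.A *ᵥ L.v 1) = 1 ∧
  ∀ j : ℕ, 1 ≤ j → j ≤ m →
    (L.alpha j = L.w j ⬝ᵥ (L.A *ᵥ (L.A *ᵥ L.v j))) ∧
    (L.vhat (j + 1) = L.A *ᵥ L.v j - L.alpha j • L.v j - L.beta j • L.v (j - 1)) ∧
    (L.what (j + 1) = (L.A)ᵀ *ᵥ L.w j - L.alpha j • L.w j - L.delta j • L.w (j - 1)) ∧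
    (L.delta (j + 1) = Real.sqrt |L.what (j + 1) ⬝ᵥ (L.A *ᵥ L.vhat (j + 1))|) ∧
    (L.beta (j + 1) = (L.what (j + 1) ⬝ᵥ (L.A *ᵥ L.vhat (j + 1))) / L.delta (j + 1)) ∧
    (L.v (j + 1) = (L.delta (j + 1))⁻¹ • L.vhat (j + 1)) ∧
    (L.w (j + 1) = (L.beta (j + 1))⁻¹ • L.what (j + 1)) ∧
    (L.what (j + 1) ⬝ᵥ (L.A *ᵥ L.vhat (j + 1)) ≠ 0)

/-- If the Lanczos biconjugate A-orthonormalization procedure is run for `m` steps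
without breakdown, the right and left Lanczos-type vectors form a biconjugate
A-orthonormal system: `⟨w i, A v j⟩ = δ_{ij}` for all `1 ≤ i, j ≤ m`. -/
theorem lanczos_biconjugate_A_orthonormal {n m : ℕ} (L : LanczosData n)
    (hrun : L.Runs m) (i j : ℕ) (hi1 : 1 ≤ i) (him : i ≤ m)
    (hj1 : 1 ≤ j) (hjm : j ≤ m) :
    L.w i ⬝ᵥ (L.A *ᵥ L.v j) = if i = j then 1 else 0 := by
  obtain ⟨hv0, hw0, hb1, hd1, h11, hrec⟩ := hrun
  -- nonvanishing of delta and beta at each completed step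
  have hδne : ∀ p : ℕ, 1 ≤ p → p ≤ m → L.delta (p + 1) ≠ 0 := by
    intro p hp hpm
    obtain ⟨_, _, _, hd, _, _, _, hs⟩ := hrec p hp hpm
    rw [hd]
    exact Real.sqrt_ne_zero'.mpr (abs_pos.mpr hs)
  have hβne : ∀ p : ℕ, 1 ≤ p → p ≤ m → L.beta (p + 1) ≠ 0 := by
    intro p hp hpm
    obtain ⟨_, _, _, _, hb, _, _, hs⟩ := hrec p hp hpm
    rw [hb]
    exact div_ne_zero hs (hδne p hp hpm)
  -- hat vectors are scalar multiples of the normalized ones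
  have hvhat_eq : ∀ p : ℕ, 1 ≤ p → p ≤ m →
      L.vhat (p + 1) = L.delta (p + 1) • L.v (p + 1) := by
    intro p hp hpm
    obtain ⟨_, _, _, _, _, hv1, _, _⟩ := hrec p hp hpm
    rw [hv1, smul_smul, mul_inv_cancel₀ (hδne p hp hpm), one_smul]
  have hwhat_eq : ∀ p : ℕ, 1 ≤ p → p ≤ m →
      L.what (p + 1) = L.beta (p + 1) • L.w (p + 1) := by
    intro p hp hpm
    obtain ⟨_, _, _, _, _, _, hw1, _⟩ := hrec p hp hpm
    rw [hw1, smul_smul, mul_inv_cancel₀ (hβne p hp hpm), one_smul]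
  -- three-term recurrences in expanded form
  have expand_v : ∀ p : ℕ, 1 ≤ p → p ≤ m →
      L.A *ᵥ L.v p =
        L.delta (p + 1) • L.v (p + 1) + L.alpha p • L.v p + L.beta p • L.v (p - 1) := by
    intro p hp hpm
    obtain ⟨_, hv, _, _, _, _, _, _⟩ := hrec p hp hpm
    rw [← hvhat_eq p hp hpm, hv]
    abel
  have expand_w : ∀ p : ℕ, 1 ≤ p → p ≤ m →
      (L.A)ᵀ *ᵥ L.w p =
        L.beta (p + 1) • L.w (p + 1) + L.alpha p • L.w p + L.delta p • L.w (p - 1) := by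
    intro p hp hpm
    obtain ⟨_, _, hw, _, _, _, _, _⟩ := hrec p hp hpm
    rw [← hwhat_eq p hp hpm, hw]
    abel
  have hAAdot : ∀ (x y : Fin n → ℝ),
      x ⬝ᵥ (L.A *ᵥ (L.A *ᵥ y)) = ((L.A)ᵀ *ᵥ x) ⬝ᵥ (L.A *ᵥ y) := by
    intro x y
    rw [Matrix.mulVec_transpose, ← Matrix.dotProduct_mulVec]
  -- main induction
  suffices H : ∀ k, k ≤ m → ∀ i j, 1 ≤ i → i ≤ k → 1 ≤ j → j ≤ k →
      L.w i ⬝ᵥ (L.A *ᵥ L.v j) = if i = j then 1 else 0 by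
    exact H m le_rfl i j hi1 him hj1 hjm
  clear hi1 him hj1 hjm i j
  intro k
  induction k with
  | zero => intro _ i j hi hik; omega
  | succ k ih =>
    intro hkm i j hi hik hj hjk
    rcases Nat.eq_zero_or_pos k with rfl | hk
    · interval_cases i
      interval_cases j
      simpa using h11
    -- now 1 ≤ k and k + 1 ≤ m
    have hkm' : k ≤ m := le_trans (Nat.le_succ k) hkm
    have ih' := ih hkm'
    obtain ⟨hak, hvk, hwk, hdk, hbk, hvk1, hwk1, hsk⟩ := hrec k hk hkm'
    -- claim 1 : for i ≤ k, ⟨w i, A vhat (k+1)⟩ = 0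
    have claim1 : ∀ i, 1 ≤ i → i ≤ k → L.w i ⬝ᵥ (L.A *ᵥ L.vhat (k + 1)) = 0 := by
      intro i hi hik
      rw [hvk]
      simp only [Matrix.mulVec_sub, Matrix.mulVec_smul, dotProduct_sub, dotProduct_smul,
        smul_eq_mul]
      rcases eq_or_lt_of_le hik with rfl | hilt
      · -- i = k
        have e1 := ih' i i hi hik hi hik
        rw [if_pos rfl] at e1
        have e2 : L.w i ⬝ᵥ (L.A *ᵥ L.v (i - 1)) = 0 := by
          rcases Nat.eq_or_lt_of_le hi with h1 | h2
          · rw [show i - 1 = 0 by omega, hv0]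
            simp
          · have := ih' i (i - 1) hi hik (by omega) (by omega)
            rw [if_neg (by omega : ¬ i = i - 1)] at this
            exact this
        rw [← hak, e1, e2]
        ring
      · -- i < k
        have hik' : i ≤ m := le_trans (le_of_lt hilt) hkm'
        have e2 : L.w i ⬝ᵥ (L.A *ᵥ L.v k) = 0 := by
          have := ih' i k hi (by omega) hk le_rfl
          rw [if_neg (by omega : ¬ i = k)] at this
          exact this
        have e4 : L.w i ⬝ᵥ (L.A *ᵥ (L.A *ᵥ L.v k)) = if i + 1 = k then L.beta k else 0 := by
          rw [hAAdot, expand_w i hi hik']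
          simp only [add_dotProduct, smul_dotProduct, smul_eq_mul]
          have e1 := ih' (i + 1) k (by omega) (by omega) hk le_rfl
          have e3 : L.delta i * (L.w (i - 1) ⬝ᵥ (L.A *ᵥ L.v k)) = 0 := by
            rcases Nat.eq_or_lt_of_le hi with h1 | h2
            · rw [← h1, hd1]; ring
            · have := ih' (i - 1) k (by omega) (by omega) hk le_rfl
              rw [if_neg (by omega : ¬ i - 1 = k)] at this
              rw [this]; ring
          rw [e1, e2, e3]
          by_cases hc : i + 1 = k
          · rw [if_pos hc, if_pos hc, hc]; ring
          · rw [if_neg hc, if_neg hc]; ring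
        by_cases hc : i + 1 = k
        · rw [if_pos hc] at e4
          have e5 : L.w i ⬝ᵥ (L.A *ᵥ L.v (k - 1)) = 1 := by
            have := ih' i (k - 1) hi (by omega) (by omega) (by omega)
            rw [if_pos (by omega : i = k - 1)] at this
            exact this
          rw [e4, e2, e5]
          ring
        · rw [if_neg hc] at e4
          have e5 : L.w i ⬝ᵥ (L.A *ᵥ L.v (k - 1)) = 0 := by
            have := ih' i (k - 1) hi (by omega) (by omega) (by omega)
            rw [if_neg (by omega : ¬ i = k - 1)] at this
            exact this
          rw [e4, e2, e5]
          ring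
    -- claim 2 : for j ≤ k, ⟨what (k+1), A v j⟩ = 0
    have claim2 : ∀ j, 1 ≤ j → j ≤ k → L.what (k + 1) ⬝ᵥ (L.A *ᵥ L.v j) = 0 := by
      intro j hj hjk
      rw [hwk]
      simp only [sub_dotProduct, smul_dotProduct, smul_eq_mul]
      have htr : ((L.A)ᵀ *ᵥ L.w k) ⬝ᵥ (L.A *ᵥ L.v j) = L.w k ⬝ᵥ (L.A *ᵥ (L.A *ᵥ L.v j)) :=
        (hAAdot _ _).symm
      rcases eq_or_lt_of_le hjk with rfl | hjlt
      · -- j = k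
        have e1 := ih' j j hj hjk hj hjk
        rw [if_pos rfl] at e1
        have e2 : L.delta j * (L.w (j - 1) ⬝ᵥ (L.A *ᵥ L.v j)) = 0 := by
          rcases Nat.eq_or_lt_of_le hj with h1 | h2
          · rw [← h1, hd1]; ring
          · have := ih' (j - 1) j (by omega) (by omega) hj hjk
            rw [if_neg (by omega : ¬ j - 1 = j)] at this
            rw [this]; ring
        rw [htr, ← hak, e1, e2]
        ring
      · -- j < k
        have hjm' : j ≤ m := le_trans (le_of_lt hjlt) hkm'
        have e2 : L.w k ⬝ᵥ (L.A *ᵥ L.v j) = 0 := by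
          have := ih' k j hk le_rfl hj (by omega)
          rw [if_neg (by omega : ¬ k = j)] at this
          exact this
        have e4 : L.w k ⬝ᵥ (L.A *ᵥ (L.A *ᵥ L.v j)) = if k = j + 1 then L.delta k else 0 := by
          rw [expand_v j hj hjm']
          simp only [Matrix.mulVec_add, Matrix.mulVec_smul, dotProduct_add, dotProduct_smul,
            smul_eq_mul]
          have e1 := ih' k (j + 1) hk le_rfl (by omega) (by omega)
          have e3 : L.beta j * (L.w k ⬝ᵥ (L.A *ᵥ L.v (j - 1))) = 0 := by
            rcases Nat.eq_or_lt_of_le hj with h1 | h2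
            · rw [← h1, hb1]; ring
            · have := ih' k (j - 1) hk le_rfl (by omega) (by omega)
              rw [if_neg (by omega : ¬ k = j - 1)] at this
              rw [this]; ring
          rw [e1, e2, e3]
          by_cases hc : k = j + 1
          · rw [if_pos hc, if_pos hc, hc]; ring
          · rw [if_neg hc, if_neg hc]; ring
        by_cases hc : k = j + 1
        · rw [if_pos hc] at e4
          have e5 : L.w (k - 1) ⬝ᵥ (L.A *ᵥ L.v j) = 1 := by
            have := ih' (k - 1) j (by omega) (by omega) hj (by omega)
            rw [if_pos (by omega : k - 1 = j)] at this
            exact this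
          rw [htr, e4, e2, e5]
          ring
        · rw [if_neg hc] at e4
          have e5 : L.delta k * (L.w (k - 1) ⬝ᵥ (L.A *ᵥ L.v j)) = 0 := by
            rcases Nat.eq_or_lt_of_le hk with h1 | h2
            · rw [← h1, hd1]; ring
            · have := ih' (k - 1) j (by omega) (by omega) hj (by omega)
              rw [if_neg (by omega : ¬ k - 1 = j)] at this
              rw [this]; ring
          rw [htr, e4, e2, e5]
          ring
    -- finish: split on whether i, j equal k + 1
    rcases Nat.lt_succ_iff_lt_or_eq.mp (Nat.lt_succ_of_le hik) with hik' | rfl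
    · rcases Nat.lt_succ_iff_lt_or_eq.mp (Nat.lt_succ_of_le hjk) with hjk' | rfl
      · exact ih' i j hi (by omega) hj (by omega)
      · -- j = k + 1, i ≤ k
        rw [hvk1, Matrix.mulVec_smul, dotProduct_smul, claim1 i hi (by omega), if_neg (by omega)]
        simp
    · rcases Nat.lt_succ_iff_lt_or_eq.mp (Nat.lt_succ_of_le hjk) with hjk' | rfl
      · -- i = k + 1, j ≤ k
        rw [hwk1, smul_dotProduct, claim2 j hj (by omega), if_neg (by omega)]
        simp
      · -- i = j = k + 1
        rw [if_pos rfl, hwk1, hvk1, smul_dotProduct, Matrix.mulVec_smul, dotProduct_smul,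
          smul_eq_mul, smul_eq_mul, hbk]
        have hδ := hδne k hk hkm'
        field_simp
end

section
/- If the Lanczos biconjugate A-orthonormalization procedure is run for m steps without breakdown, then W_m^T A V_m = I_m, the m×m identity matrix. -/
open Matrix

/-- `V m` is the `n × m` matrix with columns `v 1, …, v m`. -/
def LanczosData.V {n : ℕ} (L : LanczosData n) (m : ℕ) : Matrix (Fin n) (Fin m) ℝ :=
  Matrix.of fun i k => L.v (k.1 + 1) i

/-- `W m` is the `n × m` matrix with columns `w 1, …, w m`. -/
def LanczosData.W {n : ℕ} (L : LanczosData n) (m : ℕ) : Matrix (Fin n) (Fin m) ℝ :=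
  Matrix.of fun i k => L.w (k.1 + 1) i

/-- `T m` is the `m × m` tridiagonal matrix with diagonal `alpha 1, …, alpha m`,
subdiagonal `delta 2, …, delta m` and superdiagonal `beta 2, …, beta m`. -/
def LanczosData.T {n : ℕ} (L : LanczosData n) (m : ℕ) : Matrix (Fin m) (Fin m) ℝ :=
  Matrix.of fun i j =>
    if i.1 = j.1 then L.alpha (i.1 + 1)
    else if i.1 = j.1 + 1 then L.delta (i.1 + 1)
    else if j.1 = i.1 + 1 then L.beta (j.1 + 1)
    else 0

namespace LanczosAux
variable {n m : ℕ}

/-- abbreviation for the bilinear form ⟨w a, A v b⟩. -/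
def p (L : LanczosData n) (a b : ℕ) : ℝ := L.w a ⬝ᵥ (L.A *ᵥ L.v b)

lemma tp (L : LanczosData n) (u x : Fin n → ℝ) :
    ((L.A)ᵀ *ᵥ u) ⬝ᵥ x = u ⬝ᵥ (L.A *ᵥ x) := by
  rw [Matrix.mulVec_transpose, Matrix.dotProduct_mulVec]

lemma delta_ne (L : LanczosData n) (h : L.Runs m) {j : ℕ} (hj : 1 ≤ j) (hjm : j ≤ m) :
    L.delta (j + 1) ≠ 0 := by
  obtain ⟨-, -, -, -, -, hrec⟩ := h
  obtain ⟨-, -, -, hδ, -, -, -, hs⟩ := hrec j hj hjm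
  rw [hδ]
  exact ne_of_gt (Real.sqrt_pos.mpr (abs_pos.mpr hs))

lemma beta_ne (L : LanczosData n) (h : L.Runs m) {j : ℕ} (hj : 1 ≤ j) (hjm : j ≤ m) :
    L.beta (j + 1) ≠ 0 := by
  have hδ := delta_ne L h hj hjm
  obtain ⟨-, -, -, -, -, hrec⟩ := h
  obtain ⟨-, -, -, -, hβ, -, -, hs⟩ := hrec j hj hjm
  rw [hβ]
  exact div_ne_zero hs hδ

lemma delta_mul_beta (L : LanczosData n) (h : L.Runs m) {j : ℕ} (hj : 1 ≤ j) (hjm : j ≤ m) :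
    L.delta (j + 1) * L.beta (j + 1) = L.what (j + 1) ⬝ᵥ (L.A *ᵥ L.vhat (j + 1)) := by
  have hδ := delta_ne L h hj hjm
  obtain ⟨-, -, -, -, -, hrec⟩ := h
  obtain ⟨-, -, -, -, hβ, -, -, -⟩ := hrec j hj hjm
  rw [hβ]; field_simp

lemma vhat_eq (L : LanczosData n) (h : L.Runs m) {j : ℕ} (hj : 1 ≤ j) (hjm : j ≤ m) :
    L.vhat (j + 1) = L.delta (j + 1) • L.v (j + 1) := by
  have hδ := delta_ne L h hj hjm
  obtain ⟨-, -, -, -, -, hrec⟩ := h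
  obtain ⟨-, -, -, -, -, hv, -, -⟩ := hrec j hj hjm
  rw [hv, smul_smul, mul_inv_cancel₀ hδ, one_smul]

lemma what_eq (L : LanczosData n) (h : L.Runs m) {j : ℕ} (hj : 1 ≤ j) (hjm : j ≤ m) :
    L.what (j + 1) = L.beta (j + 1) • L.w (j + 1) := by
  have hβ := beta_ne L h hj hjm
  obtain ⟨-, -, -, -, -, hrec⟩ := h
  obtain ⟨-, -, -, -, -, -, hw, -⟩ := hrec j hj hjm
  rw [hw, smul_smul, mul_inv_cancel₀ hβ, one_smul]

lemma Av_eq (L : LanczosData n) (h : L.Runs m) {j : ℕ} (hj : 1 ≤ j) (hjm : j ≤ m) :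
    L.A *ᵥ L.v j =
      L.delta (j + 1) • L.v (j + 1) + L.alpha j • L.v j + L.beta j • L.v (j - 1) := by
  have h1 := vhat_eq L h hj hjm
  obtain ⟨-, -, -, -, -, hrec⟩ := h
  obtain ⟨-, hvh, -, -, -, -, -, -⟩ := hrec j hj hjm
  rw [← h1, hvh]; abel

lemma Atw_eq (L : LanczosData n) (h : L.Runs m) {j : ℕ} (hj : 1 ≤ j) (hjm : j ≤ m) :
    (L.A)ᵀ *ᵥ L.w j =
      L.beta (j + 1) • L.w (j + 1) + L.alpha j • L.w j + L.delta j • L.w (j - 1) := by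
  have h1 := what_eq L h hj hjm
  obtain ⟨-, -, -, -, -, hrec⟩ := h
  obtain ⟨-, -, hwh, -, -, -, -, -⟩ := hrec j hj hjm
  rw [← h1, hwh]; abel


lemma key (L : LanczosData n) (h : L.Runs m) :
    ∀ j, 1 ≤ j → j ≤ m → ∀ a b, 1 ≤ a → a ≤ j → 1 ≤ b → b ≤ j →
      L.w a ⬝ᵥ (L.A *ᵥ L.v b) = if a = b then 1 else 0 := by
  obtain ⟨hv0, hw0, hb1, hd1, h11, hrec⟩ := h
  have h' : L.Runs m := ⟨hv0, hw0, hb1, hd1, h11, hrec⟩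
  intro j hj
  induction j, hj using Nat.le_induction with
  | base =>
    intro _ a b ha haj hb hbj
    obtain rfl : a = 1 := by omega
    obtain rfl : b = 1 := by omega
    simpa using h11
  | succ j hj IH =>
    intro hjm
    have hjm' : j ≤ m := by omega
    have IH' := IH hjm'
    obtain ⟨hα, hvh, hwh, hδd, hβd, hvdef, hwdef, hs⟩ := hrec j hj hjm'
    have hδne := delta_ne L h' hj hjm'
    have hβne := beta_ne L h' hj hjm'
    -- Claim 1 : new left vector orthogonal to old right vectors
    have claim1 : ∀ b, 1 ≤ b → b ≤ j → L.w (j+1) ⬝ᵥ (L.A *ᵥ L.v b) = 0 := by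
      intro b hb hbj
      have expand : L.w (j+1) ⬝ᵥ (L.A *ᵥ L.v b) =
          (L.beta (j+1))⁻¹ * ((L.w j ⬝ᵥ (L.A *ᵥ (L.A *ᵥ L.v b)))
            - L.alpha j * (L.w j ⬝ᵥ (L.A *ᵥ L.v b))
            - L.delta j * (L.w (j-1) ⬝ᵥ (L.A *ᵥ L.v b))) := by
        rw [hwdef, hwh]
        simp only [smul_dotProduct, sub_dotProduct, tp, smul_eq_mul]
      rcases eq_or_lt_of_le hbj with hbe | hbl
      · -- b = j
        subst hbe
        have h2 : L.w b ⬝ᵥ (L.A *ᵥ L.v b) = 1 := by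
          simpa using IH' b b hb le_rfl hb le_rfl
        have h3 : L.delta b * (L.w (b-1) ⬝ᵥ (L.A *ᵥ L.v b)) = 0 := by
          rcases eq_or_lt_of_le hb with h1 | h1
          · rw [← h1, hd1]; ring
          · have := IH' (b-1) b (by omega) (by omega) hb le_rfl
            rw [this, if_neg (by omega)]; ring
        rw [expand, ← hα, h2, h3]
        ring
      · -- b < j
        have hbm : b ≤ m := by omega
        have hAv := Av_eq L h' hb hbm
        have e1 : L.w j ⬝ᵥ (L.A *ᵥ L.v (b+1)) = if j = b+1 then 1 else 0 :=
          IH' j (b+1) hj le_rfl (by omega) hbl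
        have e2 : L.w j ⬝ᵥ (L.A *ᵥ L.v b) = 0 := by
          have := IH' j b hj le_rfl hb (by omega)
          rwa [if_neg (by omega)] at this
        have e3 : L.beta b * (L.w j ⬝ᵥ (L.A *ᵥ L.v (b-1))) = 0 := by
          rcases eq_or_lt_of_le hb with h1 | h1
          · rw [← h1, hb1]; ring
          · have := IH' j (b-1) hj le_rfl (by omega) (by omega)
            rw [this, if_neg (by omega)]; ring
        have e4 : L.w (j-1) ⬝ᵥ (L.A *ᵥ L.v b) = if j - 1 = b then 1 else 0 :=
          IH' (j-1) b (by omega) (by omega) hb (by omega)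
        have eT : L.w j ⬝ᵥ (L.A *ᵥ (L.A *ᵥ L.v b)) =
            L.delta (b+1) * (if j = b+1 then 1 else 0) := by
          rw [hAv]
          simp only [Matrix.mulVec_add, Matrix.mulVec_smul, dotProduct_add,
            dotProduct_smul, smul_eq_mul]
          rw [e1, e2, e3]
          ring
        rw [expand, eT, e2, e4]
        rcases eq_or_ne j (b+1) with he | he
        · rw [if_pos he, if_pos (by omega), he]
          all_goals ring
        · rw [if_neg he, if_neg (by omega)]
          ring
    -- Claim 2 : old left vectors orthogonal to new right vector
    have claim2 : ∀ a, 1 ≤ a → a ≤ j → L.w a ⬝ᵥ (L.A *ᵥ L.v (j+1)) = 0 := by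
      intro a ha haj
      have expand : L.w a ⬝ᵥ (L.A *ᵥ L.v (j+1)) =
          (L.delta (j+1))⁻¹ * ((L.w a ⬝ᵥ (L.A *ᵥ (L.A *ᵥ L.v j)))
            - L.alpha j * (L.w a ⬝ᵥ (L.A *ᵥ L.v j))
            - L.beta j * (L.w a ⬝ᵥ (L.A *ᵥ L.v (j-1)))) := by
        rw [hvdef, hvh]
        simp only [Matrix.mulVec_smul, dotProduct_smul, Matrix.mulVec_sub,
          dotProduct_sub, smul_eq_mul]
      rcases eq_or_lt_of_le haj with hae | hal
      · -- a = j
        subst hae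
        have h2 : L.w a ⬝ᵥ (L.A *ᵥ L.v a) = 1 := by
          simpa using IH' a a ha le_rfl ha le_rfl
        have h3 : L.beta a * (L.w a ⬝ᵥ (L.A *ᵥ L.v (a-1))) = 0 := by
          rcases eq_or_lt_of_le ha with h1 | h1
          · rw [← h1, hb1]; ring
          · have := IH' a (a-1) ha le_rfl (by omega) (by omega)
            rw [this, if_neg (by omega)]; ring
        rw [expand, ← hα, h2, h3]
        ring
      · -- a < j
        have ham : a ≤ m := by omega
        have hAtw := Atw_eq L h' ha ham
        have e1 : L.w (a+1) ⬝ᵥ (L.A *ᵥ L.v j) = if a+1 = j then 1 else 0 :=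
          IH' (a+1) j (by omega) hal hj le_rfl
        have e2 : L.w a ⬝ᵥ (L.A *ᵥ L.v j) = 0 := by
          have := IH' a j ha (by omega) hj le_rfl
          rwa [if_neg (by omega)] at this
        have e3 : L.delta a * (L.w (a-1) ⬝ᵥ (L.A *ᵥ L.v j)) = 0 := by
          rcases eq_or_lt_of_le ha with h1 | h1
          · rw [← h1, hd1]; ring
          · have := IH' (a-1) j (by omega) (by omega) hj le_rfl
            rw [this, if_neg (by omega)]; ring
        have e4 : L.w a ⬝ᵥ (L.A *ᵥ L.v (j-1)) = if a = j - 1 then 1 else 0 :=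
          IH' a (j-1) ha (by omega) (by omega) (by omega)
        have eT : L.w a ⬝ᵥ (L.A *ᵥ (L.A *ᵥ L.v j)) =
            L.beta (a+1) * (if a+1 = j then 1 else 0) := by
          rw [← tp, hAtw]
          simp only [add_dotProduct, smul_dotProduct, smul_eq_mul, tp]
          rw [e1, e2, e3]
          ring
        rw [expand, eT, e2, e4]
        rcases eq_or_ne (a+1) j with he | he
        · rw [if_pos he, if_pos (by omega), ← he]
          all_goals ring
        · rw [if_neg he, if_neg (by omega)]
          ring
    -- Claim 3 : normalization of the new pair
    have claim3 : L.w (j+1) ⬝ᵥ (L.A *ᵥ L.v (j+1)) = 1 := by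
      have hdb := delta_mul_beta L h' hj hjm'
      rw [hwdef, hvdef]
      simp only [Matrix.mulVec_smul, smul_dotProduct, dotProduct_smul, smul_eq_mul]
      rw [← hdb]
      field_simp
    intro a b ha haj hb hbj
    rcases eq_or_lt_of_le haj with hae | hal
    · rcases eq_or_lt_of_le hbj with hbe | hbl
      · subst hae; subst hbe; simp [claim3]
      · subst hae
        rw [claim1 b hb (by omega), if_neg (by omega)]
    · rcases eq_or_lt_of_le hbj with hbe | hbl
      · subst hbe
        rw [claim2 a ha (by omega), if_neg (by omega)]
      · exact IH' a b ha (by omega) hb (by omega)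

end LanczosAux


/-- If the procedure is run for `m` steps without breakdown, then
`W_mᵀ A V_m = I_m`, the `m × m` identity matrix. -/
theorem lanczos_WTAV_eq_one {n m : ℕ} (L : LanczosData n) (hrun : L.Runs m) :
    (L.W m)ᵀ * L.A * L.V m = 1 := by
  ext i k
  have hi : i.1 + 1 ≤ m := i.isLt
  have hk : k.1 + 1 ≤ m := k.isLt
  have entry : ((L.W m)ᵀ * L.A * L.V m) i k =
      L.w (i.1 + 1) ⬝ᵥ (L.A *ᵥ L.v (k.1 + 1)) := by
    rw [Matrix.mul_assoc]
    simp [Matrix.mul_apply, LanczosData.W, LanczosData.V, Matrix.mulVec,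
      dotProduct, Finset.mul_sum]
  rw [entry, LanczosAux.key L hrun m (by omega) le_rfl (i.1 + 1) (k.1 + 1)
    (by omega) hi (by omega) hk]
  simp [Matrix.one_apply, Fin.ext_iff]
end

section
/- Suppose the Lanczos biconjugate A-orthonormalization procedure is run for m steps without breakdown, started with v_1 = r_0/β where r_0 = b − A x_0 and β = ‖r_0‖_2 > 0. Then the approximation x_m = x_0 + V_m y_m satisfies the Petrov–Galerkin condition (A^T W_m)^T (b − A x_m) = 0 if and only if the coefficient vector y_m ∈ ℝ^m satisfies the tridiagonal system T_m y_m = β e_1. -/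
open Matrix

/-- bilinear form values -/
def lanczosS {n : ℕ} (L : LanczosData n) (i j : ℕ) : ℝ := L.w i ⬝ᵥ (L.A *ᵥ L.v j)

def lanczosT {n : ℕ} (L : LanczosData n) (i j : ℕ) : ℝ :=
  L.w i ⬝ᵥ (L.A *ᵥ (L.A *ᵥ L.v j))

lemma lanczos_delta_ne {n m : ℕ} (L : LanczosData n) (hrun : L.Runs m)
    {j : ℕ} (hj1 : 1 ≤ j) (hjm : j ≤ m) : L.delta (j + 1) ≠ 0 := by
  obtain ⟨-, -, -, -, -, hrec⟩ := hrun
  obtain ⟨-, -, -, hde, -, -, -, hne⟩ := hrec j hj1 hjm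
  rw [hde]
  exact ne_of_gt (Real.sqrt_pos.mpr (abs_pos.mpr hne))

lemma lanczos_betadelta {n m : ℕ} (L : LanczosData n) (hrun : L.Runs m)
    {j : ℕ} (hj1 : 1 ≤ j) (hjm : j ≤ m) :
    L.beta (j + 1) * L.delta (j + 1) = L.what (j + 1) ⬝ᵥ (L.A *ᵥ L.vhat (j + 1)) := by
  have hδ := lanczos_delta_ne L hrun hj1 hjm
  obtain ⟨-, -, -, -, -, hrec⟩ := hrun
  obtain ⟨-, -, -, -, hbe, -, -, -⟩ := hrec j hj1 hjm
  rw [hbe]; field_simp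

lemma lanczos_beta_ne {n m : ℕ} (L : LanczosData n) (hrun : L.Runs m)
    {j : ℕ} (hj1 : 1 ≤ j) (hjm : j ≤ m) : L.beta (j + 1) ≠ 0 := by
  have h := lanczos_betadelta L hrun hj1 hjm
  obtain ⟨-, -, -, -, -, hrec⟩ := hrun
  obtain ⟨-, -, -, -, -, -, -, hne⟩ := hrec j hj1 hjm
  intro h0
  rw [h0, zero_mul] at h
  exact hne h.symm

lemma lanczos_rec1 {n m : ℕ} (L : LanczosData n) (hrun : L.Runs m)
    {j : ℕ} (hj1 : 1 ≤ j) (hjm : j ≤ m) (i : ℕ) :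
    L.delta (j + 1) * lanczosS L i (j + 1) =
      lanczosT L i j - L.alpha j * lanczosS L i j - L.beta j * lanczosS L i (j - 1) := by
  have hδ := lanczos_delta_ne L hrun hj1 hjm
  obtain ⟨-, -, -, -, -, hrec⟩ := hrun
  obtain ⟨-, hvh, -, -, -, hv, -, -⟩ := hrec j hj1 hjm
  have hvv : L.delta (j + 1) • L.v (j + 1) = L.vhat (j + 1) := by
    rw [hv, smul_smul, mul_inv_cancel₀ hδ, one_smul]
  have : L.delta (j + 1) * lanczosS L i (j + 1) =
      L.w i ⬝ᵥ (L.A *ᵥ (L.delta (j + 1) • L.v (j + 1))) := by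
    simp [lanczosS, Matrix.mulVec_smul, dotProduct_smul, smul_eq_mul]
  rw [this, hvv, hvh]
  simp [Matrix.mulVec_sub, dotProduct_sub, Matrix.mulVec_smul,
    dotProduct_smul, smul_eq_mul, lanczosS, lanczosT]

lemma lanczos_rec2 {n m : ℕ} (L : LanczosData n) (hrun : L.Runs m)
    {i : ℕ} (hi1 : 1 ≤ i) (him : i ≤ m) (j : ℕ) :
    L.beta (i + 1) * lanczosS L (i + 1) j =
      lanczosT L i j - L.alpha i * lanczosS L i j - L.delta i * lanczosS L (i - 1) j := by
  have hβ := lanczos_beta_ne L hrun hi1 him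
  obtain ⟨-, -, -, -, -, hrec⟩ := hrun
  obtain ⟨-, -, hwh, -, -, -, hw, -⟩ := hrec i hi1 him
  have hww : L.beta (i + 1) • L.w (i + 1) = L.what (i + 1) := by
    rw [hw, smul_smul, mul_inv_cancel₀ hβ, one_smul]
  have h1 : L.beta (i + 1) * lanczosS L (i + 1) j =
      (L.beta (i + 1) • L.w (i + 1)) ⬝ᵥ (L.A *ᵥ L.v j) := by
    simp [lanczosS, smul_dotProduct, smul_eq_mul]
  rw [h1, hww, hwh]
  simp only [sub_dotProduct, smul_dotProduct, smul_eq_mul,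
    Matrix.mulVec_transpose]
  rw [← Matrix.dotProduct_mulVec]
  simp [lanczosS, lanczosT]

lemma lanczos_diag {n m : ℕ} (L : LanczosData n) (hrun : L.Runs m)
    {j : ℕ} (hj1 : 1 ≤ j) (hjm : j ≤ m) : lanczosS L (j + 1) (j + 1) = 1 := by
  have hbd := lanczos_betadelta L hrun hj1 hjm
  obtain ⟨-, -, -, -, -, hrec⟩ := hrun
  obtain ⟨-, -, -, -, -, hv, hw, hne⟩ := hrec j hj1 hjm
  have : lanczosS L (j + 1) (j + 1) =
      (L.beta (j + 1) * L.delta (j + 1))⁻¹ * (L.what (j + 1) ⬝ᵥ (L.A *ᵥ L.vhat (j + 1))) := by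
    rw [lanczosS, hv, hw]
    simp [smul_dotProduct, dotProduct_smul, Matrix.mulVec_smul, smul_eq_mul]
    ring
  rw [this, hbd, inv_mul_cancel₀ hne]

lemma lanczos_S_zero_right {n m : ℕ} (L : LanczosData n) (hrun : L.Runs m) (i : ℕ) :
    lanczosS L i 0 = 0 := by
  rw [lanczosS, hrun.1]; simp

lemma lanczos_S_zero_left {n m : ℕ} (L : LanczosData n) (hrun : L.Runs m) (j : ℕ) :
    lanczosS L 0 j = 0 := by
  rw [lanczosS, hrun.2.1]; simp

lemma lanczos_biortho {n m : ℕ} (L : LanczosData n) (hrun : L.Runs m) :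
    ∀ i j, 1 ≤ i → i ≤ m + 1 → 1 ≤ j → j ≤ m + 1 →
      lanczosS L i j = if i = j then 1 else 0 := by
  suffices H : ∀ k, k ≤ m → ∀ i j, 1 ≤ i → i ≤ k + 1 → 1 ≤ j → j ≤ k + 1 →
      lanczosS L i j = if i = j then 1 else 0 by
    intro i j h1 h2 h3 h4
    exact H m le_rfl i j h1 h2 h3 h4
  intro k
  induction k with
  | zero =>
    intro _ i j h1 h2 h3 h4
    have hi : i = 1 := by omega
    have hj : j = 1 := by omega
    subst hi; subst hj
    simpa [lanczosS] using hrun.2.2.2.2.1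
  | succ k IH =>
    intro hk1 i j h1 h2 h3 h4
    have hkm : k + 1 ≤ m := hk1
    have IH' := IH (by omega)
    -- extended values, allowing index 0
    have SE : ∀ i j, i ≤ k + 1 → j ≤ k + 1 →
        lanczosS L i j = if i = j ∧ 1 ≤ i then 1 else 0 := by
      intro i j h2 h4
      rcases Nat.eq_zero_or_pos i with hi | hi
      · subst hi
        rw [lanczos_S_zero_left L hrun]
        simp
      rcases Nat.eq_zero_or_pos j with hj | hj
      · subst hj
        rw [lanczos_S_zero_right L hrun]
        have : ¬ (i = 0 ∧ 1 ≤ i) := by omega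
        simp [this]
      rw [IH' i j hi h2 hj h4]
      by_cases h : i = j
      · rw [if_pos h, if_pos ⟨h, hi⟩]
      · rw [if_neg h, if_neg (fun hc => h hc.1)]
    have halpha : L.alpha (k + 1) = lanczosT L (k + 1) (k + 1) :=
      (hrun.2.2.2.2.2 (k + 1) (by omega) hkm).1
    -- t values in column k+1, rows 1..k
    have tcol : ∀ i, 1 ≤ i → i ≤ k →
        lanczosT L i (k + 1) = if i = k then L.beta (k + 1) else 0 := by
      intro i hi1 hik
      have h2 := lanczos_rec2 L hrun hi1 (by omega : i ≤ m) (k + 1)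
      obtain ⟨i', rfl⟩ : ∃ i', i = i' + 1 := ⟨i - 1, by omega⟩
      have e1 : lanczosS L (i' + 1 + 1) (k + 1) =
          if i' + 1 + 1 = k + 1 ∧ 1 ≤ i' + 1 + 1 then 1 else 0 :=
        SE _ _ (by omega) (by omega)
      have e2 : lanczosS L (i' + 1) (k + 1) = if i' + 1 = k + 1 ∧ 1 ≤ i' + 1 then 1 else 0 :=
        SE _ _ (by omega) (by omega)
      have e3 : lanczosS L i' (k + 1) = if i' = k + 1 ∧ 1 ≤ i' then 1 else 0 :=
        SE i' (k + 1) (by omega) (by omega)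
      simp only [Nat.add_sub_cancel] at h2
      rw [e1, e2, e3] at h2
      have c2 : ¬ (i' + 1 = k + 1 ∧ 1 ≤ i' + 1) := by omega
      have c3 : ¬ (i' = k + 1 ∧ 1 ≤ i') := by omega
      rw [if_neg c2, if_neg c3] at h2
      by_cases h : i' + 1 = k
      · subst h
        have c1 : (i' + 1 + 1 = i' + 1 + 1 ∧ 1 ≤ i' + 1 + 1) := by omega
        rw [if_pos c1] at h2
        rw [if_pos rfl]
        linarith
      · have c1 : ¬ (i' + 1 + 1 = k + 1 ∧ 1 ≤ i' + 1 + 1) := by omega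
        rw [if_neg c1] at h2
        rw [if_neg h]
        linarith
    -- t values in row k+1, columns 1..k
    have trow : ∀ j, 1 ≤ j → j ≤ k →
        lanczosT L (k + 1) j = if j = k then L.delta (k + 1) else 0 := by
      intro j hj1 hjk
      have h2 := lanczos_rec1 L hrun hj1 (by omega : j ≤ m) (k + 1)
      obtain ⟨j', rfl⟩ : ∃ j', j = j' + 1 := ⟨j - 1, by omega⟩
      have e1 : lanczosS L (k + 1) (j' + 1 + 1) =
          if k + 1 = j' + 1 + 1 ∧ 1 ≤ k + 1 then 1 else 0 :=
        SE _ _ (by omega) (by omega)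
      have e2 : lanczosS L (k + 1) (j' + 1) = if k + 1 = j' + 1 ∧ 1 ≤ k + 1 then 1 else 0 :=
        SE _ _ (by omega) (by omega)
      have e3 : lanczosS L (k + 1) j' = if k + 1 = j' ∧ 1 ≤ k + 1 then 1 else 0 :=
        SE (k + 1) j' (by omega) (by omega)
      simp only [Nat.add_sub_cancel] at h2
      rw [e1, e2, e3] at h2
      have c2 : ¬ (k + 1 = j' + 1 ∧ 1 ≤ k + 1) := by omega
      have c3 : ¬ (k + 1 = j' ∧ 1 ≤ k + 1) := by omega
      rw [if_neg c2, if_neg c3] at h2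
      by_cases h : j' + 1 = k
      · subst h
        have c1 : (j' + 1 + 1 = j' + 1 + 1 ∧ 1 ≤ j' + 1 + 1) := by omega
        rw [if_pos c1] at h2
        rw [if_pos rfl]
        linarith
      · have c1 : ¬ (k + 1 = j' + 1 + 1 ∧ 1 ≤ k + 1) := by omega
        rw [if_neg c1] at h2
        rw [if_neg h]
        linarith
    -- new column is zero
    have scol : ∀ i, 1 ≤ i → i ≤ k + 1 → lanczosS L i (k + 2) = 0 := by
      intro i hi1 hik
      have hδ := lanczos_delta_ne L hrun (by omega : 1 ≤ k + 1) hkm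
      have h2 := lanczos_rec1 L hrun (by omega : 1 ≤ k + 1) hkm i
      simp only [Nat.add_sub_cancel] at h2
      have e2 : lanczosS L i (k + 1) = if i = k + 1 ∧ 1 ≤ i then 1 else 0 :=
        SE _ _ (by omega) (by omega)
      have e3 : lanczosS L i k = if i = k ∧ 1 ≤ i then 1 else 0 :=
        SE _ _ (by omega) (by omega)
      rw [e2, e3] at h2
      have key : L.delta (k + 1 + 1) * lanczosS L i (k + 1 + 1) = 0 := by
        rcases Nat.lt_or_ge i (k + 1) with hlt | hge
        · rw [tcol i hi1 (by omega)] at h2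
          have c2 : ¬ (i = k + 1 ∧ 1 ≤ i) := by omega
          rw [if_neg c2] at h2
          by_cases h : i = k
          · have c3 : (i = k ∧ 1 ≤ i) := by omega
            rw [if_pos c3] at h2
            rw [if_pos h] at h2
            linarith
          · rw [if_neg h] at h2
            have c3 : ¬ (i = k ∧ 1 ≤ i) := by omega
            rw [if_neg c3] at h2
            linarith
        · have hieq : i = k + 1 := by omega
          subst hieq
          rw [← halpha] at h2
          have c2 : (k + 1 = k + 1 ∧ 1 ≤ k + 1) := by omega
          have c3 : ¬ (k + 1 = k ∧ 1 ≤ k + 1) := by omega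
          rw [if_pos c2, if_neg c3] at h2
          linarith
      have := mul_eq_zero.mp key
      tauto
    -- new row is zero
    have srow : ∀ j, 1 ≤ j → j ≤ k + 1 → lanczosS L (k + 2) j = 0 := by
      intro j hj1 hjk
      have hβ := lanczos_beta_ne L hrun (by omega : 1 ≤ k + 1) hkm
      have h2 := lanczos_rec2 L hrun (by omega : 1 ≤ k + 1) hkm j
      simp only [Nat.add_sub_cancel] at h2
      have e2 : lanczosS L (k + 1) j = if k + 1 = j ∧ 1 ≤ k + 1 then 1 else 0 :=
        SE _ _ (by omega) (by omega)
      have e3 : lanczosS L k j = if k = j ∧ 1 ≤ k then 1 else 0 :=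
        SE _ _ (by omega) (by omega)
      rw [e2, e3] at h2
      have key : L.beta (k + 1 + 1) * lanczosS L (k + 1 + 1) j = 0 := by
        rcases Nat.lt_or_ge j (k + 1) with hlt | hge
        · rw [trow j hj1 (by omega)] at h2
          have c2 : ¬ (k + 1 = j ∧ 1 ≤ k + 1) := by omega
          rw [if_neg c2] at h2
          by_cases h : j = k
          · have c3 : (k = j ∧ 1 ≤ k) := by omega
            rw [if_pos c3] at h2
            rw [if_pos h] at h2
            linarith
          · rw [if_neg h] at h2
            have c3 : ¬ (k = j ∧ 1 ≤ k) := by omega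
            rw [if_neg c3] at h2
            linarith
        · have hjeq : j = k + 1 := by omega
          subst hjeq
          rw [← halpha] at h2
          have c2 : (k + 1 = k + 1 ∧ 1 ≤ k + 1) := by omega
          have c3 : ¬ (k = k + 1 ∧ 1 ≤ k) := by omega
          rw [if_pos c2, if_neg c3] at h2
          linarith
      have := mul_eq_zero.mp key
      tauto
    -- assemble
    rcases Nat.lt_or_ge i (k + 2) with hi | hi
    · rcases Nat.lt_or_ge j (k + 2) with hj | hj
      · exact IH' i j h1 (by omega) h3 (by omega)
      · have hjeq : j = k + 2 := by omega
        subst hjeq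
        rw [scol i h1 (by omega)]
        have : ¬ i = k + 2 := by omega
        rw [if_neg this]
    · have hieq : i = k + 2 := by omega
      subst hieq
      rcases Nat.lt_or_ge j (k + 2) with hj | hj
      · rw [srow j h3 (by omega)]
        have : ¬ k + 2 = j := by omega
        rw [if_neg this]
      · have hjeq : j = k + 2 := by omega
        subst hjeq
        rw [if_pos rfl]
        exact lanczos_diag L hrun (by omega : 1 ≤ k + 1) hkm

lemma my_mulVec_sum {n m : ℕ} (A : Matrix (Fin n) (Fin n) ℝ) (f : Fin m → Fin n → ℝ) :
    A *ᵥ (∑ l, f l) = ∑ l, A *ᵥ f l := by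
  funext i
  simp [Matrix.mulVec, dotProduct, Finset.sum_apply, Finset.mul_sum]
  exact Finset.sum_comm

lemma my_dot_sum {n m : ℕ} (v : Fin n → ℝ) (f : Fin m → Fin n → ℝ) :
    v ⬝ᵥ (∑ l, f l) = ∑ l, v ⬝ᵥ f l := by
  simp [dotProduct, Finset.sum_apply, Finset.mul_sum]
  exact Finset.sum_comm


/-- Petrov–Galerkin characterization: with `v 1 = r₀ / β`, the approximation
`x_m = x₀ + V_m y_m` satisfies `(Aᵀ W_m)ᵀ (b - A x_m) = 0` iff `T_m y_m = β e₁`. -/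
theorem lanczos_petrov_galerkin {n m : ℕ} (L : LanczosData n) (hm : 1 ≤ m)
    (hrun : L.Runs m) (b x0 r0 : Fin n → ℝ) (bet : ℝ)
    (hr0 : r0 = b - L.A *ᵥ x0)
    (hbet : bet = Real.sqrt (r0 ⬝ᵥ r0)) (hbetpos : 0 < bet)
    (hv1 : L.v 1 = bet⁻¹ • r0) (y : Fin m → ℝ) :
    ((L.A)ᵀ * L.W m)ᵀ *ᵥ (b - L.A *ᵥ (x0 + L.V m *ᵥ y)) = 0 ↔
      L.T m *ᵥ y = bet • (fun k : Fin m => if k.1 = 0 then (1 : ℝ) else 0) := by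
  have bio := lanczos_biortho L hrun
  -- the T matrix entries are lanczosT values
  have tval : ∀ k l : Fin m, lanczosT L (k.1 + 1) (l.1 + 1) = L.T m k l := by
    intro k l
    have hrec1 := lanczos_rec1 L hrun (by omega : 1 ≤ l.1 + 1) (by omega : l.1 + 1 ≤ m)
      (k.1 + 1)
    simp only [Nat.add_sub_cancel] at hrec1
    have e1 : lanczosS L (k.1 + 1) (l.1 + 1 + 1) = if k.1 + 1 = l.1 + 1 + 1 then 1 else 0 :=
      bio _ _ (by omega) (by omega) (by omega) (by omega)
    have e2 : lanczosS L (k.1 + 1) (l.1 + 1) = if k.1 + 1 = l.1 + 1 then 1 else 0 :=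
      bio _ _ (by omega) (by omega) (by omega) (by omega)
    have e3 : lanczosS L (k.1 + 1) l.1 = if l.1 = 0 then 0 else if k.1 + 1 = l.1 then 1 else 0 := by
      rcases Nat.eq_zero_or_pos l.1 with h | h
      · rw [h, lanczos_S_zero_right L hrun, if_pos rfl]
      · rw [if_neg (by omega)]
        exact bio _ _ (by omega) (by omega) (by omega) (by omega)
    rw [e1, e2, e3] at hrec1
    simp only [LanczosData.T, Matrix.of_apply]
    by_cases h1 : k.1 = l.1
    · rw [if_pos h1]
      rw [if_neg (by omega), if_pos (by omega)] at hrec1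
      rcases Nat.eq_zero_or_pos l.1 with h0 | h0
      · rw [if_pos h0] at hrec1
        rw [show l.1 + 1 = k.1 + 1 from by omega] at hrec1 ⊢
        linarith
      · rw [if_neg (by omega), if_neg (by omega)] at hrec1
        rw [show l.1 + 1 = k.1 + 1 from by omega] at hrec1 ⊢
        linarith
    · rw [if_neg h1]
      by_cases h2 : k.1 = l.1 + 1
      · rw [if_pos h2]
        rw [if_pos (by omega), if_neg (by omega)] at hrec1
        rcases Nat.eq_zero_or_pos l.1 with h0 | h0
        · rw [if_pos h0] at hrec1
          rw [show l.1 + 1 + 1 = k.1 + 1 from by omega] at hrec1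
          linarith
        · rw [if_neg (by omega), if_neg (by omega)] at hrec1
          rw [show l.1 + 1 + 1 = k.1 + 1 from by omega] at hrec1
          linarith
      · rw [if_neg h2]
        by_cases h3 : l.1 = k.1 + 1
        · rw [if_pos h3]
          rw [if_neg (by omega), if_neg (by omega), if_neg (by omega),
            if_pos (by omega)] at hrec1
          linarith
        · rw [if_neg h3]
          rw [if_neg (by omega), if_neg (by omega)] at hrec1
          rcases Nat.eq_zero_or_pos l.1 with h0 | h0
          · rw [if_pos h0] at hrec1
            have hb1 : L.beta 1 = 0 := hrun.2.2.1
            rw [show l.1 + 1 = 1 from by omega] at hrec1 ⊢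
            rw [hb1] at hrec1
            linarith
          · rw [if_neg (by omega), if_neg (by omega)] at hrec1
            linarith
  -- r0 in terms of v 1
  have hr0v : r0 = bet • L.v 1 := by
    rw [hv1, smul_smul, mul_inv_cancel₀ (ne_of_gt hbetpos), one_smul]
  -- main vector identity
  have step : ((L.A)ᵀ * L.W m)ᵀ *ᵥ (b - L.A *ᵥ (x0 + L.V m *ᵥ y)) =
      fun k : Fin m => bet * (if k.1 = 0 then 1 else 0) - (L.T m *ᵥ y) k := by
    have hres : b - L.A *ᵥ (x0 + L.V m *ᵥ y) = r0 - L.A *ᵥ (L.V m *ᵥ y) := by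
      rw [Matrix.mulVec_add, hr0]
      abel
    have hVy : L.V m *ᵥ y = ∑ l : Fin m, y l • L.v (l.1 + 1) := by
      funext i
      simp only [Matrix.mulVec, dotProduct, LanczosData.V, Matrix.of_apply,
        Finset.sum_apply, Pi.smul_apply, smul_eq_mul]
      exact Finset.sum_congr rfl fun _ _ => mul_comm _ _
    rw [Matrix.transpose_mul, Matrix.transpose_transpose, ← Matrix.mulVec_mulVec,
      hres, hVy]
    funext k
    have hWentry : ∀ u : Fin n → ℝ, ((L.W m)ᵀ *ᵥ u) k = L.w (k.1 + 1) ⬝ᵥ u := by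
      intro u
      simp [Matrix.mulVec, dotProduct, LanczosData.W]
    rw [hWentry]
    rw [Matrix.mulVec_sub, dotProduct_sub]
    congr 1
    · rw [hr0v, Matrix.mulVec_smul, dotProduct_smul, smul_eq_mul]
      have : L.w (k.1 + 1) ⬝ᵥ (L.A *ᵥ L.v 1) = lanczosS L (k.1 + 1) 1 := rfl
      rw [this, bio _ _ (by omega) (by omega) (by omega) (by omega)]
      congr 1
      by_cases h : k.1 = 0
      · rw [if_pos h, if_pos (by omega)]
      · rw [if_neg h, if_neg (by omega)]
    · rw [my_mulVec_sum, my_mulVec_sum, my_dot_sum]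
      have hTy : (L.T m *ᵥ y) k = ∑ l, y l * L.T m k l := by
        simp only [Matrix.mulVec, dotProduct]
        exact Finset.sum_congr rfl fun _ _ => mul_comm _ _
      rw [hTy]
      apply Finset.sum_congr rfl
      intro l _
      rw [Matrix.mulVec_smul, Matrix.mulVec_smul, dotProduct_smul, smul_eq_mul]
      have hlt : L.w (k.1 + 1) ⬝ᵥ (L.A *ᵥ (L.A *ᵥ L.v (l.1 + 1))) =
          lanczosT L (k.1 + 1) (l.1 + 1) := rfl
      rw [hlt, tval k l]
  rw [step]
  constructor
  · intro h
    funext k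
    have := congrFun h k
    simp only [Pi.zero_apply, Pi.smul_apply, smul_eq_mul] at this ⊢
    linarith [this]
  · intro h
    funext k
    have := congrFun h k
    simp only [Pi.zero_apply, Pi.smul_apply, smul_eq_mul] at this ⊢
    linarith [this]
end

section
/- Suppose the Lanczos biconjugate A-orthonormalization procedure is run for m steps without breakdown, started with w_1 = r_0^*/β^* where r_0^* = b^* − A^T x_0^* and β^* = ‖r_0^*‖_2 > 0. Then the dual approximation x_m^* = x_0^* + W_m y_m^* satisfies the dual Petrov–Galerkin condition (A V_m)^T (b^* − A^T x_m^*) = 0 if and only if the coefficient vector y_m^* ∈ ℝ^m satisfies T_m^T y_m^* = β^* e_1. -/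
open Matrix

private lemma LanczosData.basic {n m : ℕ} (L : LanczosData n) (hrun : L.Runs m)
    {j : ℕ} (h1 : 1 ≤ j) (h2 : j ≤ m) :
    L.delta (j+1) ≠ 0 ∧ L.beta (j+1) ≠ 0 ∧
    L.vhat (j+1) = L.delta (j+1) • L.v (j+1) ∧
    L.what (j+1) = L.beta (j+1) • L.w (j+1) ∧
    L.beta (j+1) * L.delta (j+1) = L.what (j+1) ⬝ᵥ (L.A *ᵥ L.vhat (j+1)) := by
  obtain ⟨ha, hv, hw, hd, hb, hvn, hwn, hs⟩ := hrun.2.2.2.2.2 j h1 h2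
  have hd0 : L.delta (j+1) ≠ 0 := by
    rw [hd]; exact Real.sqrt_ne_zero'.mpr (abs_pos.mpr hs)
  have hb0 : L.beta (j+1) ≠ 0 := by rw [hb]; exact div_ne_zero hs hd0
  refine ⟨hd0, hb0, ?_, ?_, ?_⟩
  · rw [hvn, smul_smul, mul_inv_cancel₀ hd0, one_smul]
  · rw [hwn, smul_smul, mul_inv_cancel₀ hb0, one_smul]
  · rw [hb, div_mul_cancel₀ _ hd0]
private lemma LanczosData.ortho {n m : ℕ} (L : LanczosData n) (hrun : L.Runs m) :
    ∀ k, k ≤ m → ∀ i j, 1 ≤ i → i ≤ k + 1 → 1 ≤ j → j ≤ k + 1 →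
      L.w i ⬝ᵥ (L.A *ᵥ L.v j) = if i = j then 1 else 0 := by
  obtain ⟨hv0, hw0, hb1, hd1, h11, hrec⟩ := hrun
  intro k
  induction k with
  | zero =>
    intro _ i j hi1 hi2 hj1 hj2
    have h1 : i = 1 := le_antisymm hi2 hi1
    have h2 : j = 1 := le_antisymm hj2 hj1
    subst h1; subst h2; simpa using h11
  | succ k ih =>
    intro hkm i j hi1 hi2 hj1 hj2
    have hkm' : k ≤ m := Nat.le_of_succ_le hkm
    have ih' := ih hkm'
    obtain ⟨haK, hvK, hwK, hdK, hbK, hvnK, hwnK, hsK⟩ := hrec (k+1) (by omega) hkm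
    obtain ⟨hd0, hb0, hvhat, hwhat, hbd⟩ :=
      L.basic ⟨hv0, hw0, hb1, hd1, h11, hrec⟩ (j := k+1) (by omega) hkm
    have hBKk : L.w (k+1) ⬝ᵥ (L.A *ᵥ L.v k) = 0 := by
      rcases Nat.eq_zero_or_pos k with h0 | h1
      · rw [h0, hv0]; simp
      · rw [ih' (k+1) k (by omega) (by omega) h1 (by omega), if_neg (by omega)]
    have hBkK : L.w k ⬝ᵥ (L.A *ᵥ L.v (k+1)) = 0 := by
      rcases Nat.eq_zero_or_pos k with h0 | h1
      · rw [h0, hw0]; simp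
      · rw [ih' k (k+1) h1 (by omega) (by omega) (by omega), if_neg (by omega)]
    have H1 : ∀ i, 1 ≤ i → i ≤ k + 1 → L.w i ⬝ᵥ (L.A *ᵥ L.vhat (k+1+1)) = 0 := by
      intro i hi1 hi2
      rw [hvK]
      simp only [Matrix.mulVec_sub, Matrix.mulVec_smul, dotProduct_sub,
        dotProduct_smul, smul_eq_mul, Nat.add_sub_cancel]
      rcases eq_or_lt_of_le hi2 with hiK | hiK
      · subst hiK
        rw [← haK, ih' (k+1) (k+1) (by omega) (by omega) (by omega) (by omega),
          if_pos rfl, hBKk]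
        ring
      · have hik : i ≤ k := by omega
        obtain ⟨hai, hvi, hwi, hdi, hbi, hvni, hwni, hsi⟩ := hrec i hi1 (by omega)
        obtain ⟨hdi0, hbi0, hvhati, hwhati, hbdi⟩ :=
          L.basic ⟨hv0, hw0, hb1, hd1, h11, hrec⟩ (j := i) hi1 (by omega)
        have hAtw : L.Aᵀ *ᵥ L.w i
            = L.what (i+1) + L.alpha i • L.w i + L.delta i • L.w (i-1) := by
          rw [hwi]; abel
        have expand : L.w i ⬝ᵥ (L.A *ᵥ (L.A *ᵥ L.v (k+1)))
            = (L.Aᵀ *ᵥ L.w i) ⬝ᵥ (L.A *ᵥ L.v (k+1)) := by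
          rw [Matrix.mulVec_transpose, ← Matrix.dotProduct_mulVec]
        rw [expand, hAtw, hwhati]
        simp only [add_dotProduct, smul_dotProduct, smul_eq_mul]
        have e1 : L.w (i+1) ⬝ᵥ (L.A *ᵥ L.v (k+1)) = if i + 1 = k + 1 then 1 else 0 :=
          ih' (i+1) (k+1) (by omega) (by omega) (by omega) (by omega)
        have e2 : L.w i ⬝ᵥ (L.A *ᵥ L.v (k+1)) = 0 := by
          rw [ih' i (k+1) hi1 (by omega) (by omega) (by omega), if_neg (by omega)]
        have e3 : L.delta i * (L.w (i-1) ⬝ᵥ (L.A *ᵥ L.v (k+1))) = 0 := by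
          by_cases hi' : i = 1
          · subst hi'; rw [hd1, zero_mul]
          · rw [ih' (i-1) (k+1) (by omega) (by omega) (by omega) (by omega),
              if_neg (by omega), mul_zero]
        have e4 : L.w i ⬝ᵥ (L.A *ᵥ L.v k) = if i = k then 1 else 0 :=
          ih' i k hi1 (by omega) (by omega) (by omega)
        rw [e1, e2, e3, e4]
        by_cases hik' : i = k
        · subst hik'; rw [if_pos rfl, if_pos rfl]; ring
        · rw [if_neg (by omega), if_neg hik']; ring
    have H2 : ∀ j, 1 ≤ j → j ≤ k + 1 → L.what (k+1+1) ⬝ᵥ (L.A *ᵥ L.v j) = 0 := by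
      intro j hj1 hj2
      rw [hwK]
      simp only [sub_dotProduct, smul_dotProduct, smul_eq_mul,
        Nat.add_sub_cancel]
      rw [Matrix.mulVec_transpose, ← Matrix.dotProduct_mulVec]
      rcases eq_or_lt_of_le hj2 with hjK | hjK
      · subst hjK
        rw [← haK, ih' (k+1) (k+1) (by omega) (by omega) (by omega) (by omega),
          if_pos rfl, hBkK]
        ring
      · have hjk : j ≤ k := by omega
        obtain ⟨haj, hvj, hwj, hdj, hbj, hvnj, hwnj, hsj⟩ := hrec j hj1 (by omega)
        obtain ⟨hdj0, hbj0, hvhatj, hwhatj, hbdj⟩ :=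
          L.basic ⟨hv0, hw0, hb1, hd1, h11, hrec⟩ (j := j) hj1 (by omega)
        have hAv : L.A *ᵥ L.v j
            = L.delta (j+1) • L.v (j+1) + L.alpha j • L.v j + L.beta j • L.v (j-1) := by
          rw [← hvhatj, hvj]; abel
        have e1 : L.w (k+1) ⬝ᵥ (L.A *ᵥ L.v (j+1)) = if k + 1 = j + 1 then 1 else 0 :=
          ih' (k+1) (j+1) (by omega) (by omega) (by omega) (by omega)
        have e2 : L.w (k+1) ⬝ᵥ (L.A *ᵥ L.v j) = 0 := by
          rw [ih' (k+1) j (by omega) (by omega) hj1 (by omega), if_neg (by omega)]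
        have e2' : L.beta j * (L.w (k+1) ⬝ᵥ (L.A *ᵥ L.v (j-1))) = 0 := by
          by_cases hj' : j = 1
          · subst hj'; rw [hb1, zero_mul]
          · rw [ih' (k+1) (j-1) (by omega) (by omega) (by omega) (by omega),
              if_neg (by omega), mul_zero]
        have hfirst : L.w (k+1) ⬝ᵥ (L.A *ᵥ (L.A *ᵥ L.v j))
            = L.delta (j+1) * (if k + 1 = j + 1 then 1 else 0) := by
          rw [hAv]
          simp only [Matrix.mulVec_add, Matrix.mulVec_smul, dotProduct_add,
            dotProduct_smul, smul_eq_mul]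
          rw [e1, e2, e2']
          ring
        have e4 : L.w k ⬝ᵥ (L.A *ᵥ L.v j) = if k = j then 1 else 0 :=
          ih' k j (by omega) (by omega) hj1 (by omega)
        rw [hfirst, e2, e4]
        by_cases hjk' : j = k
        · subst hjk'; rw [if_pos rfl, if_pos rfl]; ring
        · rw [if_neg (by omega), if_neg (by omega)]; ring
    have hBnew1 : ∀ i, 1 ≤ i → i ≤ k + 1 → L.w i ⬝ᵥ (L.A *ᵥ L.v (k+1+1)) = 0 := by
      intro i h1 h2
      rw [hvnK, Matrix.mulVec_smul, dotProduct_smul, H1 i h1 h2, smul_zero]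
    have hBnew2 : ∀ j, 1 ≤ j → j ≤ k + 1 → L.w (k+1+1) ⬝ᵥ (L.A *ᵥ L.v j) = 0 := by
      intro j h1 h2
      rw [hwnK, smul_dotProduct, H2 j h1 h2, smul_zero]
    have hBnew11 : L.w (k+1+1) ⬝ᵥ (L.A *ᵥ L.v (k+1+1)) = 1 := by
      rw [hwnK, hvnK, smul_dotProduct, Matrix.mulVec_smul, dotProduct_smul,
        smul_eq_mul, smul_eq_mul, ← hbd]
      field_simp
    by_cases hi : i ≤ k + 1 <;> by_cases hj : j ≤ k + 1
    · exact ih' i j hi1 hi hj1 hj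
    · have hj' : j = k+1+1 := by omega
      subst hj'
      rw [hBnew1 i hi1 hi, if_neg (by omega)]
    · have hi' : i = k+1+1 := by omega
      subst hi'
      rw [hBnew2 j hj1 hj, if_neg (by omega)]
    · have hi' : i = k+1+1 := by omega
      have hj' : j = k+1+1 := by omega
      subst hi'; subst hj'
      rw [hBnew11, if_pos rfl]

/-- Dual Petrov–Galerkin characterization: with `w 1 = r₀* / β*`, the dual
approximation `x_m* = x₀* + W_m y_m*` satisfies `(A V_m)ᵀ (b* - Aᵀ x_m*) = 0` iff
`T_mᵀ y_m* = β* e₁`. -/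
theorem lanczos_dual_petrov_galerkin {n m : ℕ} (L : LanczosData n) (hm : 1 ≤ m)
    (hrun : L.Runs m) (bs x0s r0s : Fin n → ℝ) (bets : ℝ)
    (hr0s : r0s = bs - (L.A)ᵀ *ᵥ x0s)
    (hbets : bets = Real.sqrt (r0s ⬝ᵥ r0s)) (hbetspos : 0 < bets)
    (hw1 : L.w 1 = bets⁻¹ • r0s) (ys : Fin m → ℝ) :
    (L.A * L.V m)ᵀ *ᵥ (bs - (L.A)ᵀ *ᵥ (x0s + L.W m *ᵥ ys)) = 0 ↔
      (L.T m)ᵀ *ᵥ ys = bets • (fun k : Fin m => if k.1 = 0 then (1 : ℝ) else 0) := by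
  have ho := L.ortho hrun m le_rfl
  obtain ⟨hv0, hw0, hb1, hd1, h11, hrec⟩ := hrun
  -- the key tridiagonal identity
  have hT : ∀ i j : Fin m,
      L.w (i.1+1) ⬝ᵥ (L.A *ᵥ (L.A *ᵥ L.v (j.1+1))) = L.T m i j := by
    intro i j
    obtain ⟨haj, hvj, hwj, hdj, hbj, hvnj, hwnj, hsj⟩ :=
      hrec (j.1+1) (by omega) (by omega)
    obtain ⟨hdj0, hbj0, hvhatj, hwhatj, hbdj⟩ :=
      L.basic ⟨hv0, hw0, hb1, hd1, h11, hrec⟩ (j := j.1+1) (by omega) (by omega)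
    have hAv : L.A *ᵥ L.v (j.1+1)
        = L.delta (j.1+1+1) • L.v (j.1+1+1) + L.alpha (j.1+1) • L.v (j.1+1)
          + L.beta (j.1+1) • L.v (j.1+1-1) := by
      rw [← hvhatj, hvj]; abel
    rw [hAv]
    simp only [Matrix.mulVec_add, Matrix.mulVec_smul, dotProduct_add,
      dotProduct_smul, smul_eq_mul, Nat.add_sub_cancel]
    have e1 : L.w (i.1+1) ⬝ᵥ (L.A *ᵥ L.v (j.1+1+1))
        = if i.1+1 = j.1+1+1 then 1 else 0 :=
      ho (i.1+1) (j.1+1+1) (by omega) (by omega) (by omega) (by omega)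
    have e2 : L.w (i.1+1) ⬝ᵥ (L.A *ᵥ L.v (j.1+1))
        = if i.1+1 = j.1+1 then 1 else 0 :=
      ho (i.1+1) (j.1+1) (by omega) (by omega) (by omega) (by omega)
    have e3 : L.beta (j.1+1) * (L.w (i.1+1) ⬝ᵥ (L.A *ᵥ L.v j.1))
        = if i.1+1 = j.1 then L.beta (j.1+1) else 0 := by
      rcases Nat.eq_zero_or_pos j.1 with h0 | h1
      · rw [h0, hb1, zero_mul, if_neg (by omega)]
      · rw [ho (i.1+1) j.1 (by omega) (by omega) h1 (by omega)]
        by_cases h : i.1+1 = j.1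
        · rw [if_pos h, if_pos h, mul_one]
        · rw [if_neg h, if_neg h, mul_zero]
    rw [e1, e2, e3]
    show _ = L.T m i j
    simp only [LanczosData.T, Matrix.of_apply]
    split_ifs <;>
      first
        | rfl
        | (exfalso; omega)
        | (simp only [mul_one, mul_zero, add_zero, zero_add] <;>
           first | rfl | (congr 1 <;> omega) | ring)
  have hM : (L.A * L.V m)ᵀ * L.Aᵀ * L.W m = (L.T m)ᵀ := by
    ext kk i
    show _ = L.T m i kk
    rw [← hT i kk]
    simp only [Matrix.mul_apply, Matrix.transpose_apply, LanczosData.V, LanczosData.W,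
      Matrix.of_apply, Matrix.mulVec, dotProduct]
    refine Finset.sum_congr rfl fun q _ => ?_
    rw [Finset.sum_mul, Finset.mul_sum]
    refine Finset.sum_congr rfl fun p _ => ?_
    ring
  have hterm1 : (L.A * L.V m)ᵀ *ᵥ r0s
      = bets • (fun kk : Fin m => if kk.1 = 0 then (1:ℝ) else 0) := by
    have hr0w : r0s = bets • L.w 1 := by
      rw [hw1, smul_smul, mul_inv_cancel₀ (ne_of_gt hbetspos), one_smul]
    funext kk
    have h1 := ho 1 (kk.1+1) le_rfl (by omega) (by omega) (by omega)
    show ((L.A * L.V m)ᵀ *ᵥ r0s) kk = bets * (if kk.1 = 0 then 1 else 0)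
    have h2 : (if kk.1 = 0 then (1:ℝ) else 0) = if (1:ℕ) = kk.1 + 1 then 1 else 0 := by
      by_cases h : kk.1 = 0
      · rw [if_pos h, if_pos (by omega)]
      · rw [if_neg h, if_neg (by omega)]
    rw [h2, ← h1, hr0w]
    simp only [Matrix.mulVec, dotProduct, Matrix.transpose_apply, Matrix.mul_apply,
      LanczosData.V, Matrix.of_apply, Pi.smul_apply, smul_eq_mul]
    rw [Finset.mul_sum]
    refine Finset.sum_congr rfl fun q _ => ?_
    ring
  have main : (L.A * L.V m)ᵀ *ᵥ (bs - L.Aᵀ *ᵥ (x0s + L.W m *ᵥ ys))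
      = bets • (fun kk : Fin m => if kk.1 = 0 then (1:ℝ) else 0) - (L.T m)ᵀ *ᵥ ys := by
    have hb : bs - L.Aᵀ *ᵥ (x0s + L.W m *ᵥ ys) = r0s - L.Aᵀ *ᵥ (L.W m *ᵥ ys) := by
      rw [hr0s, Matrix.mulVec_add]; abel
    rw [hb, Matrix.mulVec_sub, hterm1, Matrix.mulVec_mulVec, Matrix.mulVec_mulVec, hM]
  rw [main, sub_eq_zero]
  exact eq_comm
end

section
/- Suppose the Lanczos biconjugate A-orthonormalization procedure is run for m steps without breakdown, started with v_1 = r_0/β where r_0 = b − A x_0 and β = ‖r_0‖_2 > 0, and let y_m ∈ ℝ^m satisfy T_m y_m = β e_1. Then the m-th primary residual vector r_m = b − A x_m with x_m = x_0 + V_m y_m satisfies r_m = −δ_{m+1} (e_m^T y_m) v_{m+1}; in particular r_m is a scalar multiple of v_{m+1}. -/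
open Matrix

/-- Primary residual formula: if `T_m y_m = β e₁` then the residual
`r_m = b - A x_m` with `x_m = x₀ + V_m y_m` satisfies
`r_m = -δ_{m+1} (e_mᵀ y_m) v_{m+1}`; in particular it is a scalar multiple of
`v_{m+1}`. -/
theorem lanczos_primary_residual {n m : ℕ} (L : LanczosData n) (hm : 1 ≤ m)
    (hrun : L.Runs m) (b x0 r0 : Fin n → ℝ) (bet : ℝ)
    (hr0 : r0 = b - L.A *ᵥ x0)
    (hbet : bet = Real.sqrt (r0 ⬝ᵥ r0)) (hbetpos : 0 < bet)
    (hv1 : L.v 1 = bet⁻¹ • r0) (y : Fin m → ℝ)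
    (hy : L.T m *ᵥ y = bet • (fun k : Fin m => if k.1 = 0 then (1 : ℝ) else 0)) :
    b - L.A *ᵥ (x0 + L.V m *ᵥ y) =
      (-(L.delta (m + 1) * y ⟨m - 1, by omega⟩)) • L.v (m + 1) := by

  obtain ⟨hv0, hw0, hb1, hd1, hwv, hrec⟩ := hrun
  -- the three-term recurrence for `A v_j`
  have hstep : ∀ j, 1 ≤ j → j ≤ m →
      L.A *ᵥ L.v j =
        L.delta (j+1) • L.v (j+1) + L.alpha j • L.v j + L.beta j • L.v (j-1) := by
    intro j h1 h2
    obtain ⟨hα, hvh, hwh, hδ, hβ, hvn, hwn, hne⟩ := hrec j h1 h2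
    have hδne : L.delta (j+1) ≠ 0 := by
      rw [hδ]
      exact (Real.sqrt_pos.mpr (abs_pos.mpr hne)).ne'
    have hdv : L.delta (j+1) • L.v (j+1) = L.vhat (j+1) := by
      rw [hvn, smul_inv_smul₀ hδne]
    rw [hdv, hvh]
    abel
  -- sums of `if`-indexed vectors
  have hite : ∀ (a : ℕ) (C : Fin n → ℝ),
      (∑ k : Fin m, if (k : ℕ) = a then C else 0) = if a < m then C else 0 := by
    intro a C
    rw [Fin.sum_univ_eq_sum_range (fun j => if j = a then C else 0) m,
      Finset.sum_ite_eq' (Finset.range m) a (fun _ => C)]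
    simp
  have hite' : ∀ (a : ℕ) (C : Fin n → ℝ),
      (∑ k : Fin m, if (k : ℕ) + 1 = a then C else 0) =
        if (a ≤ m ∧ 1 ≤ a) then C else 0 := by
    intro a C
    rcases a with _ | a
    · simp
    · have : ∀ k : ℕ, ((k + 1 = a + 1) = (k = a)) := fun k => by
        simp [Nat.succ_inj]
      simp only [this, hite a C]
      congr 1
      simp only [eq_iff_iff]
      omega
  -- the column identity for `T`
  have hcol : ∀ l : Fin m, (∑ k : Fin m, L.T m k l • L.v (k.1+1)) =
      L.alpha (l.1+1) • L.v (l.1+1)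
      + (if l.1+1 < m then L.delta (l.1+2) • L.v (l.1+2) else 0)
      + L.beta (l.1+1) • L.v l.1 := by
    intro l
    have hsum : ∀ k : Fin m, L.T m k l • L.v (k.1+1) =
        (if (k : ℕ) = (l : ℕ) then L.alpha (l.1+1) • L.v (l.1+1) else 0)
        + (if (k : ℕ) = (l : ℕ)+1 then L.delta (l.1+2) • L.v (l.1+2) else 0)
        + (if (k : ℕ)+1 = (l : ℕ) then L.beta (l.1+1) • L.v l.1 else 0) := by
      intro k
      simp only [LanczosData.T, Matrix.of_apply]
      by_cases h1 : (k : ℕ) = (l : ℕ)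
      · rw [if_pos h1, if_pos h1, if_neg (by omega : ¬((k : ℕ) = (l : ℕ)+1)),
          if_neg (by omega : ¬((k : ℕ)+1 = (l : ℕ))), h1, add_zero, add_zero]
      · by_cases h2 : (k : ℕ) = (l : ℕ)+1
        · rw [if_neg h1, if_neg h1, if_pos h2, if_pos h2,
            if_neg (by omega : ¬((k : ℕ)+1 = (l : ℕ))), h2, zero_add, add_zero]
        · by_cases h3 : (l : ℕ) = (k : ℕ)+1
          · rw [if_neg h1, if_neg h1, if_neg h2, if_neg h2, if_pos h3,
              if_pos h3.symm, zero_add, zero_add, ← h3]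
          · rw [if_neg h1, if_neg h1, if_neg h2, if_neg h2, if_neg h3,
              if_neg (fun h => h3 h.symm), zero_smul, zero_add, zero_add]
    rw [Finset.sum_congr rfl (fun k _ => hsum k)]
    rw [Finset.sum_add_distrib, Finset.sum_add_distrib, hite, hite, hite']
    rw [if_pos l.isLt]
    congr 1
    by_cases hl : 1 ≤ (l : ℕ)
    · rw [if_pos ⟨by omega, hl⟩]
    · have hl0 : (l : ℕ) = 0 := by omega
      rw [if_neg (by omega), hl0, hb1, hv0, zero_smul]
  set lm : Fin m := ⟨m - 1, by omega⟩ with hlm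
  -- the per-column difference identity
  have hdiff : ∀ l : Fin m,
      y l • (L.A *ᵥ L.v (l.1+1)) =
      y l • (∑ k : Fin m, L.T m k l • L.v (k.1+1))
      + (if l = lm then (L.delta (m+1) * y l) • L.v (m+1) else 0) := by
    intro l
    have hl1 : (l:ℕ)+1-1 = (l:ℕ) := rfl
    rw [hcol l, hstep ((l:ℕ)+1) (by omega) l.isLt, hl1]
    by_cases h : (l:ℕ)+1 < m
    · rw [if_pos h, if_neg (by simp [hlm, Fin.ext_iff]; omega)]
      module
    · have hm1 : (l:ℕ)+1 = m := by omega
      rw [if_neg h, if_pos (by simp [hlm, Fin.ext_iff]; omega),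
        show (l:ℕ)+1+1 = m+1 by omega]
      module
  -- assemble the key identity
  have hVy : L.V m *ᵥ y = ∑ k : Fin m, y k • L.v (k.1+1) := by
    funext i
    simp [Matrix.mulVec, dotProduct, LanczosData.V, Finset.sum_apply, mul_comm]
  have hAVy : L.A *ᵥ (L.V m *ᵥ y) = ∑ k : Fin m, y k • (L.A *ᵥ L.v (k.1+1)) := by
    rw [hVy, ← Matrix.mulVecLin_apply, map_sum]
    simp [Matrix.mulVecLin_apply]
  have hswap : (∑ l : Fin m, y l • (∑ k : Fin m, L.T m k l • L.v (k.1+1)))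
      = ∑ k : Fin m, (L.T m *ᵥ y) k • L.v (k.1+1) := by
    simp only [Finset.smul_sum, smul_smul]
    rw [Finset.sum_comm]
    refine Finset.sum_congr rfl fun k _ => ?_
    rw [Matrix.mulVec, dotProduct, Finset.sum_smul]
    refine Finset.sum_congr rfl fun l _ => ?_
    rw [mul_comm]
  have hT1 : (∑ k : Fin m, (L.T m *ᵥ y) k • L.v (k.1+1)) = bet • L.v 1 := by
    rw [hy]
    have : ∀ k : Fin m, (bet • fun k : Fin m => if (k:ℕ) = 0 then (1:ℝ) else 0) k • L.v (k.1+1)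
        = if k = (⟨0, by omega⟩ : Fin m) then bet • L.v 1 else 0 := by
      intro k
      by_cases hk : (k:ℕ) = 0
      · rw [if_pos (by simp [Fin.ext_iff, hk])]
        simp [hk]
      · rw [if_neg (by simp [Fin.ext_iff, hk])]
        simp [hk]
    rw [Finset.sum_congr rfl (fun k _ => this k),
      Finset.sum_ite_eq' Finset.univ (⟨0, by omega⟩ : Fin m) (fun _ => bet • L.v 1)]
    simp
  have hr0' : bet • L.v 1 = r0 := by rw [hv1, smul_inv_smul₀ hbetpos.ne']
  have hAV : L.A *ᵥ (L.V m *ᵥ y) = r0 + (L.delta (m+1) * y lm) • L.v (m+1) := by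
    rw [hAVy, Finset.sum_congr rfl (fun l _ => hdiff l), Finset.sum_add_distrib, hswap,
      hT1, hr0',
      Finset.sum_ite_eq' Finset.univ lm (fun l => (L.delta (m+1) * y l) • L.v (m+1))]
    simp
  rw [Matrix.mulVec_add, hAV, hr0, neg_smul]
  abel
end

section
/- Suppose the Lanczos biconjugate A-orthonormalization procedure is run without breakdown, started with v_1 = r_0/β (β = ‖r_0‖_2 > 0, r_0 = b − A x_0) and with w_1 chosen so that w_1 = r_0^*/β^* (β^* = ‖r_0^*‖_2 > 0, r_0^* = b^* − A^T x_0^*) and ⟨w_1, A v_1⟩ = 1. Let r_i and r_j^* be the primary and dual residual vectors at steps i and j, i.e. r_i = b − A(x_0 + V_i y_i) with T_i y_i = β e_1 and r_j^* = b^* − A^T(x_0^* + W_j y_j^*) with T_j^T y_j^* = β^* e_1. Then the primary and dual residual vectors satisfy the biconjugate A-orthogonality conditions ⟨r_j^*, A r_i⟩ = 0 whenever i ≠ j. -/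
open Matrix

lemma tri_sum {n i : ℕ} (hi : 1 ≤ i) (v Av : ℕ → Fin n → ℝ) (a c d : ℕ → ℝ)
    (hv0 : v 0 = 0) (hc1 : c 1 = 0)
    (hrec : ∀ q, 1 ≤ q → q ≤ i → Av q = d (q+1) • v (q+1) + a q • v q + c q • v (q-1))
    (y : Fin i → ℝ) (Y : ℕ → ℝ) (hY : ∀ k : Fin i, Y k.1 = y k)
    (hY0 : ∀ t, i ≤ t → Y t = 0) :
    ∑ k : Fin i, y k • Av (k.1+1) =
      (∑ p : Fin i, (∑ q : Fin i,
        (if p.1 = q.1 then a (p.1+1) else if p.1 = q.1+1 then d (p.1+1)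
          else if q.1 = p.1+1 then c (q.1+1) else 0) * y q) • v (p.1+1))
      + (d (i+1) * Y (i-1)) • v (i+1) := by
  have hinner : ∀ p : Fin i, (∑ q : Fin i,
      (if p.1 = q.1 then a (p.1+1) else if p.1 = q.1+1 then d (p.1+1)
        else if q.1 = p.1+1 then c (q.1+1) else 0) * y q)
      = a (p.1+1) * Y p.1 + (if 1 ≤ p.1 then d (p.1+1) * Y (p.1-1) else 0)
        + c (p.1+2) * Y (p.1+1) := by
    intro p
    have hsplit : ∀ q : Fin i,
        (if p.1 = q.1 then a (p.1+1) else if p.1 = q.1+1 then d (p.1+1)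
          else if q.1 = p.1+1 then c (q.1+1) else 0) * y q
        = (if q = p then a (p.1+1) * y q else 0)
          + (if 1 ≤ p.1 ∧ q.1 = p.1 - 1 then d (p.1+1) * y q else 0)
          + (if q.1 = p.1+1 then c (q.1+1) * y q else 0) := by
      intro q
      by_cases h1 : p.1 = q.1
      · rw [if_pos h1, if_pos (Fin.ext h1.symm), if_neg (by omega : ¬(1 ≤ p.1 ∧ q.1 = p.1 - 1)),
          if_neg (by omega : ¬ q.1 = p.1 + 1)]
        ring
      · by_cases h2 : p.1 = q.1 + 1
        · rw [if_neg h1, if_pos h2, if_neg (by rintro rfl; exact h1 rfl),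
            if_pos (by omega : 1 ≤ p.1 ∧ q.1 = p.1 - 1),
            if_neg (by omega : ¬ q.1 = p.1 + 1)]
          ring
        · by_cases h3 : q.1 = p.1 + 1
          · rw [if_neg h1, if_neg h2, if_pos h3, if_neg (by rintro rfl; exact h1 rfl),
              if_neg (by omega : ¬(1 ≤ p.1 ∧ q.1 = p.1 - 1)), if_pos h3]
            ring
          · rw [if_neg h1, if_neg h2, if_neg h3, if_neg (by rintro rfl; exact h1 rfl),
              if_neg (by omega : ¬(1 ≤ p.1 ∧ q.1 = p.1 - 1)), if_neg h3]
            ring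
    rw [Finset.sum_congr rfl (fun q _ => hsplit q), Finset.sum_add_distrib,
      Finset.sum_add_distrib]
    congr 1
    · congr 1
      · rw [Finset.sum_ite_eq' Finset.univ p (fun q => a (p.1+1) * y q)]
        simp [hY p]
      · by_cases hp : 1 ≤ p.1
        · rw [if_pos hp, Finset.sum_eq_single (⟨p.1 - 1, by omega⟩ : Fin i)]
          · rw [if_pos ⟨hp, rfl⟩, hY ⟨p.1 - 1, by omega⟩]
          · intro b _ hb
            rw [if_neg]
            rintro ⟨-, h⟩
            exact hb (Fin.ext h)
          · simp
        · rw [if_neg hp]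
          apply Finset.sum_eq_zero
          intro q _
          rw [if_neg (by omega : ¬(1 ≤ p.1 ∧ q.1 = p.1 - 1))]
    · by_cases hp : p.1 + 1 < i
      · rw [Finset.sum_eq_single (⟨p.1 + 1, hp⟩ : Fin i)]
        · rw [if_pos rfl, hY ⟨p.1 + 1, hp⟩]
        · intro b _ hb
          rw [if_neg]
          intro h
          exact hb (Fin.ext h)
        · simp
      · rw [hY0 (p.1+1) (by omega), mul_zero]
        apply Finset.sum_eq_zero
        intro q _
        rw [if_neg (by omega : ¬ q.1 = p.1 + 1)]
  simp only [hinner]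
  have hL : ∑ k : Fin i, y k • Av (k.1+1) = ∑ k ∈ Finset.range i, Y k • Av (k+1) := by
    rw [← Fin.sum_univ_eq_sum_range (fun t => Y t • Av (t+1)) i]
    exact Finset.sum_congr rfl fun k _ => by rw [hY k]
  rw [hL, show (∑ p : Fin i, (a (p.1+1) * Y p.1 + (if 1 ≤ p.1 then d (p.1+1) * Y (p.1-1) else 0)
        + c (p.1+2) * Y (p.1+1)) • v (p.1+1))
      = ∑ t ∈ Finset.range i, (a (t+1) * Y t + (if 1 ≤ t then d (t+1) * Y (t-1) else 0)
        + c (t+2) * Y (t+1)) • v (t+1) from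
    Fin.sum_univ_eq_sum_range (fun t => (a (t+1) * Y t + (if 1 ≤ t then d (t+1) * Y (t-1) else 0)
        + c (t+2) * Y (t+1)) • v (t+1)) i]
  have hstepL : ∀ k ∈ Finset.range i, Y k • Av (k+1)
      = (Y k * d (k+2)) • v (k+2) + (Y k * a (k+1)) • v (k+1) + (Y k * c (k+1)) • v k := by
    intro k hk
    rw [Finset.mem_range] at hk
    rw [hrec (k+1) (by omega) (by omega)]
    simp only [Nat.add_sub_cancel]
    rw [smul_add, smul_add, smul_smul, smul_smul, smul_smul]
  rw [Finset.sum_congr rfl hstepL, Finset.sum_add_distrib, Finset.sum_add_distrib]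
  have hsplitR : ∀ t ∈ Finset.range i, (a (t+1) * Y t + (if 1 ≤ t then d (t+1) * Y (t-1) else 0)
        + c (t+2) * Y (t+1)) • v (t+1)
      = (a (t+1) * Y t) • v (t+1) + (if 1 ≤ t then d (t+1) * Y (t-1) else 0) • v (t+1)
        + (c (t+2) * Y (t+1)) • v (t+1) := fun t _ => by rw [add_smul, add_smul]
  rw [Finset.sum_congr rfl hsplitR, Finset.sum_add_distrib, Finset.sum_add_distrib]
  have h1 : ∑ t ∈ Finset.range (i+1), (if 1 ≤ t then d (t+1) * Y (t-1) else 0) • v (t+1)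
      = ∑ k ∈ Finset.range i, (Y k * d (k+2)) • v (k+2) := by
    rw [Finset.sum_range_succ']
    have hterm : ∀ k ∈ Finset.range i, (if 1 ≤ k+1 then d (k+1+1) * Y (k+1-1) else 0) • v (k+1+1)
        = (Y k * d (k+2)) • v (k+2) := by
      intro k _
      rw [if_pos (by omega), Nat.add_sub_cancel, mul_comm]
    rw [Finset.sum_congr rfl hterm]
    norm_num
  have e1 : ∑ k ∈ Finset.range i, (Y k * d (k+2)) • v (k+2)
      = (∑ t ∈ Finset.range i, (if 1 ≤ t then d (t+1) * Y (t-1) else 0) • v (t+1))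
        + (d (i+1) * Y (i-1)) • v (i+1) := by
    rw [← h1, Finset.sum_range_succ, if_pos hi]
  have e2 : ∑ k ∈ Finset.range i, (Y k * a (k+1)) • v (k+1)
      = ∑ t ∈ Finset.range i, (a (t+1) * Y t) • v (t+1) :=
    Finset.sum_congr rfl fun k _ => by rw [mul_comm]
  obtain ⟨i', rfl⟩ : ∃ i', i = i' + 1 := ⟨i - 1, by omega⟩
  have e3 : ∑ k ∈ Finset.range (i'+1), (Y k * c (k+1)) • v k
      = ∑ t ∈ Finset.range (i'+1), (c (t+2) * Y (t+1)) • v (t+1) := by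
    rw [Finset.sum_range_succ', Finset.sum_range_succ, hY0 (i'+1) le_rfl, hv0, hc1]
    simp only [smul_zero, mul_zero, zero_smul, add_zero]
    exact Finset.sum_congr rfl fun k _ => by norm_num [mul_comm]
  rw [e1, e2, e3]
  abel

lemma lanczos_flip {n : ℕ} (A : Matrix (Fin n) (Fin n) ℝ) (w u : Fin n → ℝ) :
    (Aᵀ *ᵥ w) ⬝ᵥ u = w ⬝ᵥ (A *ᵥ u) := by
  rw [Matrix.mulVec_transpose, ← Matrix.dotProduct_mulVec]

lemma lanczos_key {n m : ℕ} (L : LanczosData n) (hrun : L.Runs m) :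
    ∀ j, 1 ≤ j → j ≤ m →
      L.delta (j+1) ≠ 0 ∧ L.beta (j+1) ≠ 0 ∧
      L.beta (j+1) * L.delta (j+1) = L.what (j+1) ⬝ᵥ (L.A *ᵥ L.vhat (j+1)) ∧
      L.A *ᵥ L.v j = L.delta (j+1) • L.v (j+1) + L.alpha j • L.v j + L.beta j • L.v (j-1) ∧
      (L.A)ᵀ *ᵥ L.w j = L.beta (j+1) • L.w (j+1) + L.alpha j • L.w j + L.delta j • L.w (j-1) := by
  obtain ⟨hv0, hw0, hb1, hd1, h11, hstep⟩ := hrun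
  intro j h1 h2
  obtain ⟨hα, hvh, hwh, hδ, hβ, hv, hw, hne⟩ := hstep j h1 h2
  have hdne : L.delta (j+1) ≠ 0 := by
    rw [hδ]; exact Real.sqrt_ne_zero'.mpr (abs_pos.mpr hne)
  have hbne : L.beta (j+1) ≠ 0 := by
    rw [hβ]; exact div_ne_zero hne hdne
  have hbd : L.beta (j+1) * L.delta (j+1) = L.what (j+1) ⬝ᵥ (L.A *ᵥ L.vhat (j+1)) := by
    rw [hβ]; field_simp
  refine ⟨hdne, hbne, hbd, ?_, ?_⟩
  · have hv' : L.delta (j+1) • L.v (j+1) = L.vhat (j+1) := by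
      rw [hv, smul_smul, mul_inv_cancel₀ hdne, one_smul]
    rw [hv', hvh]
    abel
  · have hw' : L.beta (j+1) • L.w (j+1) = L.what (j+1) := by
      rw [hw, smul_smul, mul_inv_cancel₀ hbne, one_smul]
    rw [hw', hwh]
    abel

lemma lanczos_orth {n m : ℕ} (L : LanczosData n) (hrun : L.Runs m) :
    ∀ k, k ≤ m → ∀ p q, p ≤ k + 1 → q ≤ k + 1 →
      L.w p ⬝ᵥ (L.A *ᵥ L.v q) = if p = q ∧ 1 ≤ p then 1 else 0 := by
  have key := lanczos_key L hrun
  obtain ⟨hv0, hw0, hb1, hd1, h11, hstep⟩ := hrun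
  intro k
  induction k with
  | zero =>
    intro _ p q hp hq
    interval_cases p <;> interval_cases q
    · rw [hw0]; simp
    · rw [hw0]; simp
    · rw [hv0]; simp
    · rw [if_pos ⟨rfl, le_rfl⟩]; exact h11
  | succ k ih =>
    intro hk1 p q hp hq
    have hkm : k ≤ m := by omega
    have IH := ih hkm
    rcases Nat.eq_zero_or_pos p with rfl | hp1
    · simp [hw0]
    rcases Nat.eq_zero_or_pos q with rfl | hq1
    · rw [hv0, Matrix.mulVec_zero, dotProduct_zero, if_neg (by omega : ¬(p = 0 ∧ 1 ≤ p))]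
    obtain ⟨hα, hvh, hwh, hδ, hβ, hv, hw, hne⟩ := hstep (k+1) (by omega) hk1
    have hv' : L.v (k+2) = (L.delta (k+2))⁻¹ • L.vhat (k+2) := hv
    have hw' : L.w (k+2) = (L.beta (k+2))⁻¹ • L.what (k+2) := hw
    have hvh' : L.vhat (k+2) = L.A *ᵥ L.v (k+1) - L.alpha (k+1) • L.v (k+1) - L.beta (k+1) • L.v k := hvh
    have hwh' : L.what (k+2) = (L.A)ᵀ *ᵥ L.w (k+1) - L.alpha (k+1) • L.w (k+1) - L.delta (k+1) • L.w k := hwh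
    obtain ⟨hdne, hbne, hbd, -, -⟩ := key (k+1) (by omega) hk1
    have hdne' : L.delta (k+2) ≠ 0 := hdne
    have hbne' : L.beta (k+2) ≠ 0 := hbne
    by_cases hpk : p ≤ k + 1
    · by_cases hqk : q ≤ k + 1
      · exact IH p q hpk hqk
      · -- q = k+2
        have hq2 : q = k + 2 := by omega
        subst hq2
        rw [if_neg (by omega)]
        rw [hv', hvh']
        simp only [Matrix.mulVec_smul, dotProduct_smul, Matrix.mulVec_sub, dotProduct_sub,
          smul_eq_mul]
        have F1 : L.w p ⬝ᵥ (L.A *ᵥ L.v (k+1)) = if p = k+1 ∧ 1 ≤ p then 1 else 0 :=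
          IH p (k+1) hpk le_rfl
        have F2 : L.w p ⬝ᵥ (L.A *ᵥ L.v k) = if p = k ∧ 1 ≤ p then 1 else 0 :=
          IH p k hpk (by omega)
        by_cases hpk1 : p = k + 1
        · subst hpk1
          rw [← hα, F1, F2, if_pos ⟨rfl, by omega⟩, if_neg (by omega)]
          ring
        · -- 1 ≤ p ≤ k
          obtain ⟨-, -, -, -, hAtw⟩ := key p (by omega) (by omega)
          have hX : L.w p ⬝ᵥ (L.A *ᵥ (L.A *ᵥ L.v (k+1)))
              = L.beta (p+1) * (L.w (p+1) ⬝ᵥ (L.A *ᵥ L.v (k+1)))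
                + L.alpha p * (L.w p ⬝ᵥ (L.A *ᵥ L.v (k+1)))
                + L.delta p * (L.w (p-1) ⬝ᵥ (L.A *ᵥ L.v (k+1))) := by
            rw [← lanczos_flip, hAtw]
            simp only [add_dotProduct, smul_dotProduct, smul_eq_mul]
          have G1 : L.w (p+1) ⬝ᵥ (L.A *ᵥ L.v (k+1)) = if p+1 = k+1 ∧ 1 ≤ p+1 then 1 else 0 :=
            IH (p+1) (k+1) (by omega) le_rfl
          have G3 : L.w (p-1) ⬝ᵥ (L.A *ᵥ L.v (k+1)) = if p-1 = k+1 ∧ 1 ≤ p-1 then 1 else 0 :=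
            IH (p-1) (k+1) (by omega) le_rfl
          rw [hX, G1, G3, F1, F2]
          rw [if_neg (by omega : ¬(p-1 = k+1 ∧ 1 ≤ p-1)), if_neg (by omega : ¬(p = k+1 ∧ 1 ≤ p))]
          by_cases hpk' : p = k
          · subst hpk'
            rw [if_pos ⟨rfl, by omega⟩, if_pos ⟨rfl, by omega⟩]
            ring
          · rw [if_neg (by omega : ¬(p+1 = k+1 ∧ 1 ≤ p+1)), if_neg (by omega : ¬(p = k ∧ 1 ≤ p))]
            ring
    · have hp2 : p = k + 2 := by omega
      subst hp2
      by_cases hqk : q ≤ k + 1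
      · rw [if_neg (by omega)]
        rw [hw', hwh']
        simp only [smul_dotProduct, sub_dotProduct, smul_eq_mul]
        rw [lanczos_flip]
        have F1 : L.w (k+1) ⬝ᵥ (L.A *ᵥ L.v q) = if k+1 = q ∧ 1 ≤ k+1 then 1 else 0 :=
          IH (k+1) q le_rfl hqk
        have F2 : L.w k ⬝ᵥ (L.A *ᵥ L.v q) = if k = q ∧ 1 ≤ k then 1 else 0 :=
          IH k q (by omega) hqk
        by_cases hqk1 : q = k + 1
        · subst hqk1
          rw [← hα, F1, F2, if_pos ⟨rfl, by omega⟩, if_neg (by omega)]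
          ring
        · -- 1 ≤ q ≤ k
          obtain ⟨-, -, -, hAv, -⟩ := key q (by omega) (by omega)
          have hX : L.w (k+1) ⬝ᵥ (L.A *ᵥ (L.A *ᵥ L.v q))
              = L.delta (q+1) * (L.w (k+1) ⬝ᵥ (L.A *ᵥ L.v (q+1)))
                + L.alpha q * (L.w (k+1) ⬝ᵥ (L.A *ᵥ L.v q))
                + L.beta q * (L.w (k+1) ⬝ᵥ (L.A *ᵥ L.v (q-1))) := by
            conv_lhs => rw [hAv]
            simp only [Matrix.mulVec_add, Matrix.mulVec_smul, dotProduct_add, dotProduct_smul,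
              smul_eq_mul]
          have G1 : L.w (k+1) ⬝ᵥ (L.A *ᵥ L.v (q+1)) = if k+1 = q+1 ∧ 1 ≤ k+1 then 1 else 0 :=
            IH (k+1) (q+1) le_rfl (by omega)
          have G3 : L.w (k+1) ⬝ᵥ (L.A *ᵥ L.v (q-1)) = if k+1 = q-1 ∧ 1 ≤ k+1 then 1 else 0 :=
            IH (k+1) (q-1) le_rfl (by omega)
          rw [hX, G1, G3, F1, F2]
          rw [if_neg (by omega : ¬(k+1 = q-1 ∧ 1 ≤ k+1)), if_neg (by omega : ¬(k+1 = q ∧ 1 ≤ k+1))]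
          by_cases hqk' : q = k
          · subst hqk'
            rw [if_pos ⟨rfl, by omega⟩, if_pos ⟨rfl, by omega⟩]
            ring
          · rw [if_neg (by omega : ¬(k+1 = q+1 ∧ 1 ≤ k+1)), if_neg (by omega : ¬(k = q ∧ 1 ≤ k))]
            ring
      · have hq2 : q = k + 2 := by omega
        subst hq2
        rw [if_pos ⟨rfl, by omega⟩, hw', hv']
        simp only [smul_dotProduct, Matrix.mulVec_smul, dotProduct_smul, smul_eq_mul]
        rw [← hbd]
        field_simp

lemma resid_sum {n i : ℕ} (hi : 1 ≤ i) (v Av : ℕ → Fin n → ℝ) (a c d : ℕ → ℝ)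
    (T : Matrix (Fin i) (Fin i) ℝ)
    (hT : ∀ p q : Fin i, T p q = (if p.1 = q.1 then a (p.1+1) else if p.1 = q.1+1 then d (p.1+1)
      else if q.1 = p.1+1 then c (q.1+1) else 0))
    (hv0 : v 0 = 0) (hc1 : c 1 = 0)
    (hrec : ∀ q, 1 ≤ q → q ≤ i → Av q = d (q+1) • v (q+1) + a q • v q + c q • v (q-1))
    (y : Fin i → ℝ) (bet : ℝ)
    (hy : T *ᵥ y = bet • fun k : Fin i => if k.1 = 0 then (1:ℝ) else 0) :
    ∃ cr : ℝ, ∑ k : Fin i, y k • Av (k.1+1) = bet • v 1 + cr • v (i+1) := by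
  set Y : ℕ → ℝ := fun t => if h : t < i then y ⟨t, h⟩ else 0 with hYdef
  have hY : ∀ k : Fin i, Y k.1 = y k := fun k => by simp [hYdef, k.2]
  have hY0 : ∀ t, i ≤ t → Y t = 0 := fun t ht => by
    simp only [hYdef]
    rw [dif_neg (by omega)]
  refine ⟨d (i+1) * Y (i-1), ?_⟩
  rw [tri_sum hi v Av a c d hv0 hc1 hrec y Y hY hY0]
  congr 1
  have hrow : ∀ p : Fin i, (∑ q : Fin i,
      (if p.1 = q.1 then a (p.1+1) else if p.1 = q.1+1 then d (p.1+1)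
        else if q.1 = p.1+1 then c (q.1+1) else 0) * y q) = (T *ᵥ y) p := by
    intro p
    simp only [Matrix.mulVec, dotProduct, hT]
  calc ∑ p : Fin i, (∑ q : Fin i,
        (if p.1 = q.1 then a (p.1+1) else if p.1 = q.1+1 then d (p.1+1)
          else if q.1 = p.1+1 then c (q.1+1) else 0) * y q) • v (p.1+1)
      = ∑ p : Fin i, (bet * (if p.1 = 0 then 1 else 0)) • v (p.1+1) := by
        refine Finset.sum_congr rfl fun p _ => ?_
        rw [hrow p, hy]
        simp
    _ = bet • v 1 := by
        rw [Finset.sum_eq_single (⟨0, by omega⟩ : Fin i)]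
        · simp
        · intro p _ hp
          rw [if_neg (fun h => hp (Fin.ext h)), mul_zero, zero_smul]
        · simp

lemma resid_repr {n i : ℕ} (A : Matrix (Fin n) (Fin n) ℝ) (v : ℕ → Fin n → ℝ) (a c d : ℕ → ℝ)
    (T : Matrix (Fin i) (Fin i) ℝ)
    (hT : ∀ p q : Fin i, T p q = (if p.1 = q.1 then a (p.1+1) else if p.1 = q.1+1 then d (p.1+1)
      else if q.1 = p.1+1 then c (q.1+1) else 0))
    (hv0 : v 0 = 0) (hc1 : c 1 = 0)
    (hrec : ∀ q, 1 ≤ q → q ≤ i → A *ᵥ v q = d (q+1) • v (q+1) + a q • v q + c q • v (q-1))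
    (y : Fin i → ℝ) (bet : ℝ) (hbet : bet ≠ 0)
    (r0 bb xx : Fin n → ℝ) (hr0 : r0 = bb - A *ᵥ xx) (hv1 : v 1 = bet⁻¹ • r0)
    (Vm : Matrix (Fin n) (Fin i) ℝ) (hVm : ∀ (r : Fin n) (k : Fin i), Vm r k = v (k.1+1) r)
    (hy : T *ᵥ y = bet • fun k : Fin i => if k.1 = 0 then (1:ℝ) else 0) :
    ∃ cr : ℝ, bb - A *ᵥ (xx + Vm *ᵥ y) = cr • v (i+1) := by
  have hbv : bet • v 1 = bb - A *ᵥ xx := by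
    rw [hv1, smul_smul, mul_inv_cancel₀ hbet, one_smul, hr0]
  rcases Nat.eq_zero_or_pos i with rfl | hi
  · refine ⟨bet, ?_⟩
    have h0 : Vm *ᵥ y = 0 := by
      ext r
      simp [Matrix.mulVec, dotProduct]
    rw [h0, add_zero]
    rw [show (0:ℕ)+1 = 1 from rfl, hbv]
  · have hVy : Vm *ᵥ y = ∑ k : Fin i, y k • v (k.1+1) := by
      ext r
      rw [Finset.sum_apply]
      simp only [Matrix.mulVec, dotProduct, Pi.smul_apply, smul_eq_mul, hVm]
      exact Finset.sum_congr rfl fun k _ => mul_comm _ _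
    have hAVy : A *ᵥ (Vm *ᵥ y) = ∑ k : Fin i, y k • (A *ᵥ v (k.1+1)) := by
      rw [hVy]
      have h : ∀ x, A *ᵥ x = A.mulVecLin x := fun _ => rfl
      rw [h, map_sum]
      exact Finset.sum_congr rfl fun k _ => by rw [_root_.map_smul, h]
    obtain ⟨cr, hcr⟩ := resid_sum hi v (fun t => A *ᵥ v t) a c d T hT hv0 hc1 hrec y bet hy
    refine ⟨-cr, ?_⟩
    rw [Matrix.mulVec_add, hAVy, hcr, hbv, neg_smul]
    abel

/-- Biconjugate A-orthogonality of the primary and dual residual vectors: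
`⟨r_j*, A r_i⟩ = 0` whenever `i ≠ j`. -/
theorem lanczos_residuals_biconjugate_A_orthogonal {n m : ℕ} (L : LanczosData n)
    (hrun : L.Runs m)
    (b x0 r0 bs x0s r0s : Fin n → ℝ) (bet bets : ℝ)
    (hr0 : r0 = b - L.A *ᵥ x0)
    (hbet : bet = Real.sqrt (r0 ⬝ᵥ r0)) (hbetpos : 0 < bet)
    (hv1 : L.v 1 = bet⁻¹ • r0)
    (hr0s : r0s = bs - (L.A)ᵀ *ᵥ x0s)
    (hbets : bets = Real.sqrt (r0s ⬝ᵥ r0s)) (hbetspos : 0 < bets)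
    (hw1 : L.w 1 = bets⁻¹ • r0s)
    (i j : ℕ) (him : i ≤ m) (hjm : j ≤ m) (hij : i ≠ j)
    (yi : Fin i → ℝ)
    (hyi : L.T i *ᵥ yi = bet • (fun k : Fin i => if k.1 = 0 then (1 : ℝ) else 0))
    (yj : Fin j → ℝ)
    (hyj : (L.T j)ᵀ *ᵥ yj = bets • (fun k : Fin j => if k.1 = 0 then (1 : ℝ) else 0)) :
    (bs - (L.A)ᵀ *ᵥ (x0s + L.W j *ᵥ yj)) ⬝ᵥ
      (L.A *ᵥ (b - L.A *ᵥ (x0 + L.V i *ᵥ yi))) = 0 := by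
  obtain ⟨cw, hcw⟩ := resid_repr (L.A)ᵀ L.w L.alpha L.delta L.beta ((L.T j)ᵀ)
    (by
      intro p q
      show L.T j q p = _
      simp only [LanczosData.T, Matrix.of_apply]
      split_ifs <;> first | rfl | (congr 1 <;> omega) | (exfalso; omega))
    hrun.2.1 hrun.2.2.2.1
    (fun q h1 h2 => (lanczos_key L hrun q h1 (le_trans h2 hjm)).2.2.2.2)
    yj bets (ne_of_gt hbetspos) r0s bs x0s hr0s hw1 (L.W j) (fun r k => rfl) hyj
  obtain ⟨cv, hcv⟩ := resid_repr L.A L.v L.alpha L.beta L.delta (L.T i)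
    (fun p q => rfl)
    hrun.1 hrun.2.2.1
    (fun q h1 h2 => (lanczos_key L hrun q h1 (le_trans h2 him)).2.2.2.1)
    yi bet (ne_of_gt hbetpos) r0 b x0 hr0 hv1 (L.V i) (fun r k => rfl) hyi
  rw [hcw, hcv, Matrix.mulVec_smul, smul_dotProduct, dotProduct_smul, smul_eq_mul, smul_eq_mul]
  rw [lanczos_orth L hrun m le_rfl (j+1) (i+1) (by omega) (by omega),
    if_neg (by omega : ¬(j+1 = i+1 ∧ 1 ≤ j+1))]
  ring
end

section
/- Consider the BiCOR recurrences run for m steps with the coefficient choices α_j = ⟨r_j^*, A r_j⟩ / ⟨A^T p_j^*, A p_j⟩ and β_j = ⟨r_{j+1}^*, A r_{j+1}⟩ / ⟨r_j^*, A r_j⟩, and assume no breakdown occurs before step m, i.e. ⟨r_j^*, A r_j⟩ ≠ 0 and ⟨A^T p_j^*, A p_j⟩ ≠ 0 for all j ≤ m. Then for all 0 ≤ i, j ≤ m with i ≠ j: the residuals and shadow residuals are biconjugate A-orthogonal, ⟨r_j^*, A r_i⟩ = 0, and the search directions and shadow search directions are A²-biconjugate, ⟨A^T p_j^*, A p_i⟩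 = 0. -/
/-!
BiCOR is BiCG for the bilinear form `⟪u, v⟫ = u ⬝ᵥ (A *ᵥ v)`, for which `Aᵀ` is adjoint
to `A`: `⟪Aᵀ u, v⟫ = ⟪u, A v⟫`. So it suffices to prove BiCG biorthogonality for any
pairing `B` and operators `T`, `T'` adjoint for `B`. An induction on `k` shows that
`B (rs i) (r k)` and `B (ps i) (T (p k))` vanish for `i < k`: in the residual step the
choice of `α k` kills the diagonal term, and in the direction step one cancels `α i ≠ 0`
after writing `α i • T' (ps i) = rs i - rs (i + 1)`, the choice of `β k` killing the
diagonal term. Exchanging the primal and shadow sequences (flipping `B`) gives `i > k`.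
-/
open Matrix

variable {K V W : Type*} [Field K] [AddCommGroup V] [Module K V] [AddCommGroup W]
  [Module K W]

structure IsBiCGIteration (T : V →ₗ[K] V) (T' : W →ₗ[K] W) (r p : ℕ → V)
    (rs ps : ℕ → W) (α β : ℕ → K) : Prop where
  p_zero : p 0 = r 0
  ps_zero : ps 0 = rs 0
  r_succ : ∀ j, r (j + 1) = r j - α j • T (p j)
  p_succ : ∀ j, p (j + 1) = r (j + 1) + β j • p j
  rs_succ : ∀ j, rs (j + 1) = rs j - α j • T' (ps j)
  ps_succ : ∀ j, ps (j + 1) = rs (j + 1) + β j • ps j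

namespace IsBiCGIteration

variable {T : V →ₗ[K] V} {T' : W →ₗ[K] W} {r p : ℕ → V} {rs ps : ℕ → W}
  {α β : ℕ → K} (B : W →ₗ[K] V →ₗ[K] K)

theorem symm (h : IsBiCGIteration T T' r p rs ps α β) : IsBiCGIteration T' T rs ps r p α β :=
  ⟨h.ps_zero, h.p_zero, h.rs_succ, h.ps_succ, h.r_succ, h.p_succ⟩

theorem apply_r_succ (h : IsBiCGIteration T T' r p rs ps α β) (u : W) (j : ℕ) :
    B u (r (j + 1)) = B u (r j) - α j * B u (T (p j)) := by
  rw [h.r_succ, map_sub, map_smul, smul_eq_mul]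

theorem apply_T_p_succ (h : IsBiCGIteration T T' r p rs ps α β) (u : W) (j : ℕ) :
    B u (T (p (j + 1))) = B u (T (r (j + 1))) + β j * B u (T (p j)) := by
  rw [h.p_succ, map_add, map_smul, map_add, map_smul, smul_eq_mul]

theorem rs_succ_apply (h : IsBiCGIteration T T' r p rs ps α β)
    (hadj : ∀ u v, B (T' u) v = B u (T v)) (j : ℕ) (v : V) :
    B (rs (j + 1)) v = B (rs j) v - α j * B (ps j) (T v) := by
  rw [h.rs_succ, map_sub, map_smul, LinearMap.sub_apply, LinearMap.smul_apply, hadj, smul_eq_mul]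

theorem rs_apply_eq_ps_apply (h : IsBiCGIteration T T' r p rs ps α β) {v : V} {i : ℕ}
    (hv : ∀ l < i, B (ps l) v = 0) : B (rs i) v = B (ps i) v := by
  cases i with
  | zero => rw [h.ps_zero]
  | succ l =>
    rw [h.ps_succ l, map_add, map_smul, LinearMap.add_apply, LinearMap.smul_apply,
      hv l l.lt_succ_self, smul_zero, add_zero]

variable {B} {k : ℕ}

theorem rs_apply_r_succ_eq_zero (h : IsBiCGIteration T T' r p rs ps α β)
    (hF : ∀ i < k, B (rs i) (r k) = 0) (hG : ∀ i < k, B (ps i) (T (p k)) = 0)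
    (hα : α k * B (ps k) (T (p k)) = B (rs k) (r k)) :
    ∀ i ≤ k, B (rs i) (r (k + 1)) = 0 := by
  intro i hi
  have hrs : B (rs i) (T (p k)) = B (ps i) (T (p k)) :=
    h.rs_apply_eq_ps_apply B fun l hl => hG l (by omega)
  rw [h.apply_r_succ, hrs]
  rcases hi.lt_or_eq with hi | rfl
  · rw [hF i hi, hG i hi, mul_zero, sub_zero]
  · rw [hα, sub_self]

theorem ps_apply_T_p_succ_eq_zero (h : IsBiCGIteration T T' r p rs ps α β)
    (hadj : ∀ u v, B (T' u) v = B u (T v)) (hG : ∀ i < k, B (ps i) (T (p k)) = 0)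
    (hF : ∀ i ≤ k, B (rs i) (r (k + 1)) = 0)
    (hα : α k * B (ps k) (T (p k)) = B (rs k) (r k))
    (hβ : β k * B (rs k) (r k) = B (rs (k + 1)) (r (k + 1))) (hα0 : ∀ i ≤ k, α i ≠ 0) :
    ∀ i ≤ k, B (ps i) (T (p (k + 1))) = 0 := by
  intro i hi
  have hTr : α i * B (ps i) (T (r (k + 1))) =
      B (rs i) (r (k + 1)) - B (rs (i + 1)) (r (k + 1)) := by
    rw [h.rs_succ_apply B hadj]; ring
  apply mul_left_cancel₀ (hα0 i hi)
  rw [h.apply_T_p_succ, mul_add, hTr, hF i hi, mul_zero]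
  rcases hi.lt_or_eq with hi | rfl
  · rw [hF (i + 1) hi, hG i hi]; ring
  · rw [mul_left_comm (α i), hα, hβ]; ring

variable {m : ℕ}

theorem biorthogonal_of_lt (h : IsBiCGIteration T T' r p rs ps α β)
    (hadj : ∀ u v, B (T' u) v = B u (T v))
    (hα : ∀ j < m, α j * B (ps j) (T (p j)) = B (rs j) (r j))
    (hβ : ∀ j < m, β j * B (rs j) (r j) = B (rs (j + 1)) (r (j + 1)))
    (hα0 : ∀ j < m, α j ≠ 0) :
    ∀ k ≤ m, (∀ i < k, B (rs i) (r k) = 0) ∧ ∀ i < k, B (ps i) (T (p k)) = 0 := by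
  intro k
  induction k with
  | zero => simp
  | succ k ih =>
    intro hk
    obtain ⟨hF, hG⟩ := ih (by omega)
    have hF' := h.rs_apply_r_succ_eq_zero hF hG (hα k hk)
    have hG' := h.ps_apply_T_p_succ_eq_zero hadj hG hF' (hα k hk) (hβ k hk)
      fun i hi => hα0 i (by omega)
    exact ⟨fun i hi => hF' i (by omega), fun i hi => hG' i (by omega)⟩

theorem biorthogonal (h : IsBiCGIteration T T' r p rs ps α β)
    (hadj : ∀ u v, B (T' u) v = B u (T v))
    (hα : ∀ j < m, α j * B (ps j) (T (p j)) = B (rs j) (r j))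
    (hβ : ∀ j < m, β j * B (rs j) (r j) = B (rs (j + 1)) (r (j + 1)))
    (hα0 : ∀ j < m, α j ≠ 0) {i j : ℕ} (hi : i ≤ m) (hj : j ≤ m) (hij : i ≠ j) :
    B (rs j) (r i) = 0 ∧ B (ps j) (T (p i)) = 0 := by
  rcases hij.lt_or_gt with hlt | hgt
  · have hadj' : ∀ u v, B.flip (T u) v = B.flip u (T' v) := fun u v => (hadj v u).symm
    have hα' : ∀ j < m, α j * B.flip (p j) (T' (ps j)) = B.flip (r j) (rs j) := by
      simpa only [LinearMap.flip_apply, hadj] using hα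
    obtain ⟨hF, hG⟩ := h.symm.biorthogonal_of_lt hadj' hα' hβ hα0 j hj
    simpa only [LinearMap.flip_apply, hadj] using And.intro (hF i hlt) (hG i hlt)
  · obtain ⟨hF, hG⟩ := h.biorthogonal_of_lt hadj hα hβ hα0 i hi
    exact ⟨hF j hgt, hG j hgt⟩

end IsBiCGIteration

theorem Matrix.transpose_mulVec_dotProduct {ι κ R : Type*} [Fintype ι] [Fintype κ]
    [CommSemiring R] (A : Matrix ι κ R) (u : ι → R) (v : κ → R) :
    (Aᵀ *ᵥ u) ⬝ᵥ v = u ⬝ᵥ (A *ᵥ v) := by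
  rw [mulVec_transpose, dotProduct_mulVec]

/-- If the BiCOR recurrences are run for `m` steps with the standard coefficient
choices and no breakdown occurs, then for all `i ≠ j` (both at most `m`) the
residuals and shadow residuals are biconjugate A-orthogonal, and the search
directions and shadow search directions are A²-biconjugate. -/
theorem bicor_biorthogonality {n m : ℕ} (A : Matrix (Fin n) (Fin n) ℝ)
    (r p rs ps : ℕ → Fin n → ℝ) (alpha beta : ℕ → ℝ)
    (hp0 : p 0 = r 0) (hps0 : ps 0 = rs 0)
    (hr : ∀ j, r (j + 1) = r j - alpha j • (A *ᵥ p j))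
    (hp : ∀ j, p (j + 1) = r (j + 1) + beta j • p j)
    (hrs : ∀ j, rs (j + 1) = rs j - alpha j • (Aᵀ *ᵥ ps j))
    (hps : ∀ j, ps (j + 1) = rs (j + 1) + beta j • ps j)
    (halpha : ∀ j ≤ m, alpha j = (rs j ⬝ᵥ (A *ᵥ r j)) / ((Aᵀ *ᵥ ps j) ⬝ᵥ (A *ᵥ p j)))
    (hbeta : ∀ j ≤ m, beta j = (rs (j + 1) ⬝ᵥ (A *ᵥ r (j + 1))) / (rs j ⬝ᵥ (A *ᵥ r j)))
    (hnum : ∀ j ≤ m, rs j ⬝ᵥ (A *ᵥ r j) ≠ 0)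
    (hden : ∀ j ≤ m, (Aᵀ *ᵥ ps j) ⬝ᵥ (A *ᵥ p j) ≠ 0) :
    ∀ i j, i ≤ m → j ≤ m → i ≠ j →
      rs j ⬝ᵥ (A *ᵥ r i) = 0 ∧ (Aᵀ *ᵥ ps j) ⬝ᵥ (A *ᵥ p i) = 0 := by
  intro i j hi hj hij
  have hit : IsBiCGIteration A.mulVecLin Aᵀ.mulVecLin r p rs ps alpha beta :=
    ⟨hp0, hps0, hr, hp, hrs, hps⟩
  set B : (Fin n → ℝ) →ₗ[ℝ] (Fin n → ℝ) →ₗ[ℝ] ℝ := toLinearMap₂' ℝ A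
  have hB : ∀ u v, B u v = u ⬝ᵥ (A *ᵥ v) := toLinearMap₂'_apply' A
  have hBA : ∀ u v, B u (A.mulVecLin v) = (Aᵀ *ᵥ u) ⬝ᵥ (A *ᵥ v) := by
    intro u v; rw [hB, mulVecLin_apply, transpose_mulVec_dotProduct]
  have hadj : ∀ u v, B (Aᵀ.mulVecLin u) v = B u (A.mulVecLin v) := by
    intro u v; rw [hBA, hB, mulVecLin_apply]
  have hα : ∀ j < m, alpha j * B (ps j) (A.mulVecLin (p j)) = B (rs j) (r j) := by
    intro j hj
    rw [hBA, hB, halpha j hj.le, div_mul_cancel₀ _ (hden j hj.le)]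
  have hβ : ∀ j < m, beta j * B (rs j) (r j) = B (rs (j + 1)) (r (j + 1)) := by
    intro j hj
    rw [hB, hB, hbeta j hj.le, div_mul_cancel₀ _ (hnum j hj.le)]
  have hα0 : ∀ j < m, alpha j ≠ 0 := by
    intro j hj
    rw [halpha j hj.le]
    exact div_ne_zero (hnum j hj.le) (hden j hj.le)
  obtain ⟨hres, hdir⟩ := hit.biorthogonal hadj hα hβ hα0 hi hj hij
  rw [hB] at hres
  rw [hBA] at hdir
  exact ⟨hres, hdir⟩
end
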